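/- arXiv:2111.00559 — 8 statements merged into one kernel-verified Lean document; each statement's English description precedes it below -/
import Mathlib

section
/- Let p, q ∈ (0,1) and let P = (p, 1−p), Q = (q, 1−q) be distributions on two symbols. Then D(P‖Q) ≤ (p − q)² / (q(1 − q)). -/
/-- For Bernoulli distributions P = (p, 1-p), Q = (q, 1-q) with p, q ∈ (0,1),
D(P‖Q) ≤ (p-q)² / (q(1-q)). -/
theorem bernoulli_kl_le_sq (p q : ℝ) (hp0 : 0 < p) (hp1 : p < 1)
    (hq0 : 0 < q) (hq1 : q < 1) :
    p * Real.log (p / q) + (1 - p) * Real.log ((1 - p) / (1 - q))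
      ≤ (p - q) ^ 2 / (q * (1 - q)) := by
  have h1 : Real.log (p / q) ≤ p / q - 1 :=
    Real.log_le_sub_one_of_pos (by positivity)
  have h2 : Real.log ((1 - p) / (1 - q)) ≤ (1 - p) / (1 - q) - 1 :=
    Real.log_le_sub_one_of_pos (div_pos (by linarith) (by linarith))
  have key : p * (p / q - 1) + (1 - p) * ((1 - p) / (1 - q) - 1)
      = (p - q) ^ 2 / (q * (1 - q)) := by
    have hq : q ≠ 0 := ne_of_gt hq0
    have hq' : (1 - q) ≠ 0 := by linarith
    field_simp
    ring
  calc p * Real.log (p / q) + (1 - p) * Real.log ((1 - p) / (1 - q))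
      ≤ p * (p / q - 1) + (1 - p) * ((1 - p) / (1 - q) - 1) := by
        gcongr
    _ = (p - q) ^ 2 / (q * (1 - q)) := key
end

section
/- For every positive integer n, √(2πn) (n/e)^n e^{1/(12n+1)} ≤ n! ≤ √(2πn) (n/e)^n e^{1/(12n)}. -/
/-!
Write `s n = n! / (√(2n) (n/e)^n)` (Mathlib's `Stirling.stirlingSeq`), so that `s n → √π`.
The step `log s (n+1) - log s (n+2)` has the series expansion `∑ₖ r^(k+1) / (2k+3)` with
`r = (2n+3)⁻²`. Bounding `1/(2k+3)` above by `1/3` and below by `3^-(k+1)` turns it into two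
geometric series, which squeeze the step between the steps of `1/(12n+1)` and of `1/(12n)`.
Hence `log s n - 1/(12n)` increases and `log s n - 1/(12n+1)` decreases; both tend to `log √π`.
-/

open Real Filter Topology

section Telescoping

variable {α : Type*} [AddCommGroup α] [LinearOrder α] [IsOrderedAddMonoid α] [TopologicalSpace α]
  [OrderClosedTopology α] [IsTopologicalAddGroup α]

theorem le_add_of_tendsto_of_sub_succ_le {u g : ℕ → α} {L : α} (hu : Tendsto u atTop (𝓝 L))
    (hg : Tendsto g atTop (𝓝 0)) (hstep : ∀ n, u n - u (n + 1) ≤ g n - g (n + 1)) (n : ℕ) :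
    u n ≤ L + g n := by
  have hmono : Monotone fun k ↦ u k - g k :=
    monotone_nat_of_le_succ fun k ↦ by
      have := hstep k
      rw [sub_le_sub_iff] at this ⊢
      rwa [add_comm (u (k + 1))]
  have := hmono.ge_of_tendsto (by simpa using hu.sub hg) n
  rwa [sub_le_iff_le_add] at this

theorem add_le_of_tendsto_of_sub_succ_le {u g : ℕ → α} {L : α} (hu : Tendsto u atTop (𝓝 L))
    (hg : Tendsto g atTop (𝓝 0)) (hstep : ∀ n, g n - g (n + 1) ≤ u n - u (n + 1)) (n : ℕ) :
    L + g n ≤ u n := by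
  have := le_add_of_tendsto_of_sub_succ_le hu.neg (by simpa using hg.neg)
    (fun k ↦ by simpa only [neg_sub_neg, neg_sub] using neg_le_neg (hstep k)) n
  rwa [← neg_add, neg_le_neg_iff] at this

end Telescoping

theorem tendsto_one_div_twelve_mul_succ_add (c : ℝ) :
    Tendsto (fun n : ℕ ↦ 1 / (12 * ((n + 1 : ℕ) : ℝ) + c)) atTop (𝓝 0) := by
  have h : Tendsto (fun n : ℕ ↦ 12 * ((n + 1 : ℕ) : ℝ) + c) atTop atTop :=
    tendsto_atTop_add_const_right _ c <|
      (tendsto_natCast_atTop_atTop.comp (tendsto_add_atTop_nat 1)).const_mul_atTop (by norm_num)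
  simpa only [one_div, Pi.inv_def] using h.inv_tendsto_atTop

namespace Stirling

theorem tendsto_log_stirlingSeq_succ :
    Tendsto (fun n ↦ log (stirlingSeq (n + 1))) atTop (𝓝 (log √π)) :=
  (continuousAt_log (by positivity)).tendsto.comp
    (tendsto_stirlingSeq_sqrt_pi.comp (tendsto_add_atTop_nat 1))

theorem log_stirlingSeq_sdiff_ge (n : ℕ) :
    1 / (12 * ((n : ℝ) + 1) + 1) - 1 / (12 * ((n : ℝ) + 2) + 1) ≤
      log (stirlingSeq (n + 1)) - log (stirlingSeq (n + 2)) := by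
  set r : ℝ := (1 / (2 * ((n + 1 : ℕ) : ℝ) + 1)) ^ 2 with hr
  have hx : (3 : ℝ) ≤ 2 * n + 3 := by linarith [n.cast_nonneg (α := ℝ)]
  have hr_eq : r = 1 / (2 * (n : ℝ) + 3) ^ 2 := by rw [hr, div_pow, one_pow]; push_cast; ring
  have hr3 : r / 3 < 1 := by
    rw [hr_eq, div_div, div_lt_one (by positivity)]; nlinarith
  have hden : 0 < 3 * (2 * (n : ℝ) + 3) ^ 2 - 1 := by nlinarith
  have hgeo : HasSum (fun k : ℕ ↦ (r / 3) ^ (k + 1)) (1 / (3 * (2 * (n : ℝ) + 3) ^ 2 - 1)) := by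
    have h := (hasSum_geometric_of_lt_one (by positivity) hr3).mul_left (r / 3)
    simp_rw [← pow_succ', ← div_eq_mul_inv] at h
    have hval : r / 3 / (1 - r / 3) = 1 / (3 * (2 * (n : ℝ) + 3) ^ 2 - 1) := by
      rw [hr_eq]; field_simp
    rwa [hval] at h
  refine le_trans ?_ (hasSum_le (fun k ↦ ?_) hgeo (log_stirlingSeq_sdiff_hasSum n))
  · rw [div_sub_div _ _ (by positivity) (by positivity), div_le_div_iff₀ (by positivity) hden]
    nlinarith
  · have hk : (2 * k + 3 : ℝ) ≤ 3 ^ (k + 1) := by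
      have := one_add_mul_le_pow (a := (2 : ℝ)) (by norm_num) (k + 1)
      norm_num at this; linarith
    rw [div_pow, div_eq_mul_one_div (r ^ (k + 1)), mul_comm]
    gcongr
    push_cast; linarith

theorem stirlingSeq_le_sqrt_pi_mul_exp {n : ℕ} (hn : n ≠ 0) :
    stirlingSeq n ≤ √π * exp (1 / (12 * n)) := by
  obtain ⟨m, rfl⟩ := Nat.exists_eq_add_one_of_ne_zero hn
  have hlog := le_add_of_tendsto_of_sub_succ_le (g := fun k : ℕ ↦ 1 / (12 * ((k + 1 : ℕ) : ℝ)))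
    tendsto_log_stirlingSeq_succ (by simpa using tendsto_one_div_twelve_mul_succ_add 0)
    (fun k ↦ ?_) m
  · rwa [log_le_iff_le_exp (stirlingSeq'_pos m), exp_add, exp_log (by positivity)] at hlog
  · refine (log_stirlingSeq_sdiff_le _).trans_eq ?_
    push_cast
    field_simp
    ring

theorem sqrt_pi_mul_exp_le_stirlingSeq {n : ℕ} (hn : n ≠ 0) :
    √π * exp (1 / (12 * n + 1)) ≤ stirlingSeq n := by
  obtain ⟨m, rfl⟩ := Nat.exists_eq_add_one_of_ne_zero hn
  have hlog := add_le_of_tendsto_of_sub_succ_le tendsto_log_stirlingSeq_succ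
    (tendsto_one_div_twelve_mul_succ_add 1) (fun k ↦ ?_) m
  · rwa [le_log_iff_exp_le (stirlingSeq'_pos m), exp_add, exp_log (by positivity)] at hlog
  · refine le_of_eq_of_le ?_ (log_stirlingSeq_sdiff_ge k)
    push_cast
    ring

end Stirling

open Stirling in
/-- Robbins' refinement of Stirling's formula:
√(2πn) (n/e)^n e^{1/(12n+1)} ≤ n! ≤ √(2πn) (n/e)^n e^{1/(12n)} for all positive n. -/
theorem robbins_stirling (n : ℕ) (hn : 0 < n) :
    Real.sqrt (2 * Real.pi * n) * ((n : ℝ) / Real.exp 1) ^ n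
        * Real.exp (1 / (12 * (n : ℝ) + 1)) ≤ (Nat.factorial n : ℝ)
    ∧ (Nat.factorial n : ℝ) ≤ Real.sqrt (2 * Real.pi * n) * ((n : ℝ) / Real.exp 1) ^ n
        * Real.exp (1 / (12 * (n : ℝ))) := by
  have hscale : 0 < √(2 * n : ℝ) * (n / exp 1) ^ n := by positivity
  have hfact : (n.factorial : ℝ) = stirlingSeq n * (√(2 * n : ℝ) * (n / exp 1) ^ n) :=
    (div_mul_cancel₀ _ hscale.ne').symm
  have hsqrt : √(2 * π * n) = √π * √(2 * n : ℝ) := by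
    rw [← sqrt_mul pi_pos.le, ← mul_assoc, mul_comm π]
  rw [hfact, hsqrt]
  constructor
  · calc √π * √(2 * n : ℝ) * (n / exp 1) ^ n * exp (1 / (12 * n + 1))
        = √π * exp (1 / (12 * n + 1)) * (√(2 * n : ℝ) * (n / exp 1) ^ n) := by ring
      _ ≤ _ := by gcongr; exact sqrt_pi_mul_exp_le_stirlingSeq hn.ne'
  · calc stirlingSeq n * (√(2 * n : ℝ) * (n / exp 1) ^ n)
        ≤ √π * exp (1 / (12 * n)) * (√(2 * n : ℝ) * (n / exp 1) ^ n) := by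
          gcongr; exact stirlingSeq_le_sqrt_pi_mul_exp hn.ne'
      _ = _ := by ring
end

section
/- Let U be the uniform distribution on the type class T_n(P) of an n-type P over a finite alphabet, let P_{Y|X} be a channel (row-stochastic matrix), and let Q_Y be any distribution on the output alphabet. Then D(P_{Y|X}^n ∘ U ‖ Q_Y^n) = n·D(P_Y ‖ Q_Y) + E[log(ℙ[A=1|Y^n]/ℙ[A=1]) | A=1], where (X,Y)^n is drawn i.i.d. from P × P_{Y|X}, A is the indicator that X^n ∈ T_n(P), and P_Y is the marginal of Y under P × P_{Y|X}. -/
/-!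
Every sequence of `T_n(P)` has the same `P^n`-probability `∏ i, P i ^ m i`, so conditioning the
i.i.d. pair `(X, Y)^n` on `A = 1` makes `X^n` uniform on `T_n(P)`, and Bayes' rule gives
`ℙ[A = 1 | y] / ℙ[A = 1] = Pout y / P_Y^n y`. Hence
`log (Pout / Q^n) = log (P_Y^n / Q^n) + log (ℙ[A = 1 | y] / ℙ[A = 1])`. The first summand is a sum
over coordinates; averaged under the channel applied to any `x ∈ T_n(P)`, which uses the letter `i`
exactly `m i = n P i` times, it gives `n D(P_Y ‖ Q_Y)`.
-/

open Finset Real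

section TypeClass

variable {α : Type*} [Fintype α] {n : ℕ} {m : α → ℕ}

theorem prod_div_pow_pos (hm : ∑ i, m i = n) : 0 < ∏ i, ((m i : ℝ) / n) ^ m i := by
  refine prod_pos fun i _ => ?_
  rcases (m i).eq_zero_or_pos with h | h
  · simp [h]
  · have hle : m i ≤ n := hm ▸ single_le_sum (fun _ _ => Nat.zero_le _) (mem_univ i)
    exact pow_pos (div_pos (by exact_mod_cast h) (by exact_mod_cast h.trans_le hle)) _

theorem natCast_mul_div_of_sum_eq (hm : ∑ i, m i = n) (i : α) :
    (n : ℝ) * (m i / n) = m i := by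
  rcases eq_or_ne n 0 with rfl | hn
  · simp [(sum_eq_zero_iff.mp hm) i (mem_univ i)]
  · field_simp

variable [DecidableEq α] {x : Fin n → α}

def typeClass (n : ℕ) (m : α → ℕ) : Finset (Fin n → α) :=
  univ.filter fun x => ∀ i, #{t | x t = i} = m i

theorem mem_typeClass : x ∈ typeClass n m ↔ ∀ i, #{t | x t = i} = m i := by
  simp [typeClass]

@[to_additive]
theorem prod_comp_of_mem_typeClass {M : Type*} [CommMonoid M] (hx : x ∈ typeClass n m)
    (f : α → M) : ∏ t, f (x t) = ∏ i, f i ^ m i := by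
  rw [← prod_fiberwise_of_maps_to' (fun t _ => mem_univ (x t))]
  simp_rw [prod_const, mem_typeClass.mp hx]

theorem typeClass_nonempty (hm : ∑ i, m i = n) : (typeClass n m).Nonempty := by
  let e : (Σ i, Fin (m i)) ≃ Fin n := Fintype.equivOfCardEq (by simp [hm])
  refine ⟨fun t => (e.symm t).1, mem_typeClass.mpr fun i => ?_⟩
  rw [← Fintype.card_subtype, Fintype.card_congr ((e.symm.subtypeEquiv fun _ => Iff.rfl).trans
    (Equiv.sigmaSubtype i)), Fintype.card_fin]

theorem sum_typeClass_prod_mul {R : Type*} [CommSemiring R] (P : α → R) (f : Fin n → α → R) :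
    ∑ x ∈ typeClass n m, ∏ t, P (x t) * f t (x t)
      = (∏ i, P i ^ m i) * ∑ x ∈ typeClass n m, ∏ t, f t (x t) := by
  rw [mul_sum]
  exact sum_congr rfl fun x hx => by rw [prod_mul_distrib, prod_comp_of_mem_typeClass hx]

end TypeClass

section ProductKernel

variable {ι β : Type*} [Fintype ι] [DecidableEq ι] [Fintype β]

theorem sum_prod_mul_apply (w : ι → β → ℝ) (hw : ∀ s, ∑ v, w s v = 1) (g : β → ℝ) (t : ι) :
    ∑ y : ι → β, (∏ s, w s (y s)) * g (y t) = ∑ v, w t v * g v := by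
  have hsplit : ∀ y : ι → β,
      (∏ s, w s (y s)) * g (y t) = ∏ s, w s (y s) * if s = t then g (y s) else 1 := fun y => by
    rw [prod_mul_distrib, Fintype.prod_ite_eq']
  have hfactor : ∀ s, ∑ v, (w s v * if s = t then g v else 1) =
      if s = t then ∑ v, w t v * g v else 1 := fun s => by
    split_ifs with h
    · rw [h]
    · simp [hw]
  rw [Fintype.sum_congr _ _ hsplit,
    ← Fintype.prod_sum fun s v => w s v * if s = t then g v else 1,
    Fintype.prod_congr _ _ hfactor, Fintype.prod_ite_eq']

theorem sum_prod_mul_sum_apply (w : ι → β → ℝ) (hw : ∀ s, ∑ v, w s v = 1) (g : β → ℝ) :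
    ∑ y : ι → β, (∏ s, w s (y s)) * ∑ t, g (y t) = ∑ t, ∑ v, w t v * g v := by
  simp_rw [mul_sum]
  rw [sum_comm]
  exact sum_congr rfl fun t _ => sum_prod_mul_apply w hw g t

end ProductKernel

theorem mul_log_div_prod_eq_add {ι : Type*} [Fintype ι] (p : ℝ) (r s : ι → ℝ) (hs : ∀ t, s t ≠ 0)
    (hr : p ≠ 0 → ∏ t, r t ≠ 0) :
    p * log (p / ∏ t, s t) = p * ∑ t, log (r t / s t) + p * log (p / ∏ t, r t) := by
  rcases eq_or_ne p 0 with rfl | hp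
  · simp
  have hr' : ∀ t, r t ≠ 0 := fun t => prod_ne_zero_iff.mp (hr hp) t (mem_univ t)
  rw [← log_prod fun t _ => div_ne_zero (hr' t) (hs t), prod_div_distrib,
    log_div hp (prod_ne_zero_iff.mpr fun t _ => hs t),
    log_div (hr hp) (prod_ne_zero_iff.mpr fun t _ => hs t), log_div hp (hr hp)]
  ring

section Channel

variable {α β : Type*} [Fintype α] [DecidableEq α] {n : ℕ} {m : α → ℕ}

theorem posterior_div_prior_eq (P : α → ℝ) (hP : ∏ i, P i ^ m i ≠ 0) (W : α → β → ℝ)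
    (y : Fin n → β) :
    (∑ x ∈ typeClass n m, ∏ t, P (x t) * W (x t) (y t)) /
        (∑ x : Fin n → α, ∏ t, P (x t) * W (x t) (y t)) / ∑ x ∈ typeClass n m, ∏ t, P (x t)
      = (#(typeClass n m) : ℝ)⁻¹ * (∑ x ∈ typeClass n m, ∏ t, W (x t) (y t)) /
          ∏ t, ∑ i, P i * W i (y t) := by
  have hprior : ∑ x ∈ typeClass n m, ∏ t, P (x t) = (∏ i, P i ^ m i) * #(typeClass n m) := by
    simpa using sum_typeClass_prod_mul (m := m) P fun _ _ => 1
  rw [sum_typeClass_prod_mul P fun t i => W i (y t), hprior, Fintype.prod_sum, div_div,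
    mul_left_comm, mul_div_mul_left _ _ hP]
  ring

theorem prod_output_ne_zero (P : α → ℝ) (hP0 : ∀ i, 0 ≤ P i) (hP : 0 < ∏ i, P i ^ m i)
    (W : α → β → ℝ) (hW0 : ∀ i j, 0 ≤ W i j) (y : Fin n → β)
    (hS : ∑ x ∈ typeClass n m, ∏ t, W (x t) (y t) ≠ 0) : ∏ t, ∑ i, P i * W i (y t) ≠ 0 := by
  have hS' : 0 < ∑ x ∈ typeClass n m, ∏ t, W (x t) (y t) :=
    (sum_nonneg fun x _ => prod_nonneg fun t _ => hW0 _ _).lt_of_ne' hS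
  refine ne_of_gt ?_
  calc 0 < (∏ i, P i ^ m i) * ∑ x ∈ typeClass n m, ∏ t, W (x t) (y t) := mul_pos hP hS'
    _ = ∑ x ∈ typeClass n m, ∏ t, P (x t) * W (x t) (y t) :=
      (sum_typeClass_prod_mul P fun t i => W i (y t)).symm
    _ ≤ ∑ x : Fin n → α, ∏ t, P (x t) * W (x t) (y t) :=
      sum_le_sum_of_subset_of_nonneg (subset_univ _) fun x _ _ =>
        prod_nonneg fun t _ => mul_nonneg (hP0 _) (hW0 _ _)
    _ = ∏ t, ∑ i, P i * W i (y t) := (Fintype.prod_sum fun t i => P i * W i (y t)).symm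

theorem sum_typeClass_output_mul_sum [Fintype β] (hm : ∑ i, m i = n) (W : α → β → ℝ)
    (hW1 : ∀ i, ∑ j, W i j = 1) (g : β → ℝ) :
    ∑ y : Fin n → β, ((#(typeClass n m) : ℝ)⁻¹ * ∑ x ∈ typeClass n m, ∏ t, W (x t) (y t)) *
        ∑ t, g (y t)
      = n * ∑ j, (∑ i, (m i : ℝ) / n * W i j) * g j := by
  have hT : (#(typeClass n m) : ℝ) ≠ 0 := by simpa using (typeClass_nonempty hm).card_pos.ne'
  calc _ = (#(typeClass n m) : ℝ)⁻¹ * ∑ x ∈ typeClass n m,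
        ∑ y : Fin n → β, (∏ t, W (x t) (y t)) * ∑ t, g (y t) := by
        simp_rw [mul_assoc, sum_mul, ← mul_sum]
        rw [sum_comm]
    _ = (#(typeClass n m) : ℝ)⁻¹ * ∑ x ∈ typeClass n m, ∑ i, m i • ∑ j, W i j * g j := by
        refine congrArg _ (sum_congr rfl fun x hx => ?_)
        rw [sum_prod_mul_sum_apply (fun t => W (x t)) (fun t => hW1 _) g,
          sum_comp_of_mem_typeClass hx fun i => ∑ j, W i j * g j]
    _ = ∑ i, (m i : ℝ) * ∑ j, W i j * g j := by
        rw [sum_const, nsmul_eq_mul, inv_mul_cancel_left₀ hT]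
        simp_rw [nsmul_eq_mul]
    _ = n * ∑ j, (∑ i, (m i : ℝ) / n * W i j) * g j := by
        simp_rw [mul_sum, sum_mul, mul_sum]
        rw [sum_comm]
        refine sum_congr rfl fun j _ => sum_congr rfl fun i _ => ?_
        linear_combination (-(W i j * g j)) * natCast_mul_div_of_sum_eq hm i

end Channel

theorem divergence_fixed_type_identity_general
    (n q k : ℕ)
    (m : Fin q → ℕ) (hm : ∑ i, m i = n)
    (W : Fin q → Fin k → ℝ) (hW0 : ∀ i j, 0 ≤ W i j) (hW1 : ∀ i, ∑ j, W i j = 1)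
    (Q : Fin k → ℝ) (hQ0 : ∀ j, 0 < Q j) :
    -- the n-type P and its type class T_n(P)
    let P : Fin q → ℝ := fun i => (m i : ℝ) / n
    let T : Finset (Fin n → Fin q) :=
      Finset.univ.filter fun x => ∀ i, (Finset.univ.filter fun t => x t = i).card = m i
    -- distribution of Y^n when X^n is uniform on T and passed through the channel
    let Pout : (Fin n → Fin k) → ℝ :=
      fun y => ((T.card : ℝ))⁻¹ * ∑ x ∈ T, ∏ t, W (x t) (y t)
    -- marginal of Y under P × P_{Y|X}
    let PY : Fin k → ℝ := fun j => ∑ i, P i * W i j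
    -- ℙ[A = 1] when X^n ~ P^n, A = 1{X^n ∈ T}
    let PA : ℝ := ∑ x ∈ T, ∏ t, P (x t)
    -- ℙ[A = 1 | Y^n = y] when (X,Y)^n iid from P × P_{Y|X}
    let PAgiven : (Fin n → Fin k) → ℝ := fun y =>
      (∑ x ∈ T, ∏ t, P (x t) * W (x t) (y t)) /
        (∑ x : Fin n → Fin q, ∏ t, P (x t) * W (x t) (y t))
    (∑ y : Fin n → Fin k, Pout y * Real.log (Pout y / ∏ t, Q (y t)))
      = n * (∑ j, PY j * Real.log (PY j / Q j))
        + ∑ y : Fin n → Fin k, Pout y * Real.log (PAgiven y / PA) := by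
  intro P T Pout PY PA PAgiven
  -- `T` is `typeClass n m` only up to the `Decidable` instance of the filter predicate.
  have hT : T = typeClass n m := by ext x; simp [T, mem_typeClass]
  clear_value T
  subst hT
  have hc : 0 < ∏ i, P i ^ m i := prod_div_pow_pos hm
  have hpoint : ∀ y, Pout y * log (Pout y / ∏ t, Q (y t))
      = Pout y * ∑ t, log (PY (y t) / Q (y t)) + Pout y * log (PAgiven y / PA) := fun y => by
    rw [show PAgiven y / PA = Pout y / ∏ t, PY (y t) from posterior_div_prior_eq P hc.ne' W y]
    have hP0 : ∀ i, 0 ≤ P i := fun i => div_nonneg (Nat.cast_nonneg _) (Nat.cast_nonneg _)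
    exact mul_log_div_prod_eq_add _ _ _ (fun t => (hQ0 _).ne') fun hy =>
      prod_output_ne_zero P hP0 hc W hW0 y (right_ne_zero_of_mul hy)
  rw [sum_congr rfl fun y _ => hpoint y, sum_add_distrib,
    sum_typeClass_output_mul_sum hm W hW1 fun j => log (PY j / Q j)]

/-- Divergence decomposition for a channel applied to a uniform draw from a type class:
D(P_{Y|X}^n ∘ U ‖ Q_Y^n) = n·D(P_Y‖Q_Y) + E[log(ℙ[A=1|Y^n]/ℙ[A=1]) | A=1]. -/
theorem divergence_fixed_type_identity
    (n q k : ℕ) (hn : 0 < n)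
    (m : Fin q → ℕ) (hm : ∑ i, m i = n)
    (W : Fin q → Fin k → ℝ) (hW0 : ∀ i j, 0 ≤ W i j) (hW1 : ∀ i, ∑ j, W i j = 1)
    (Q : Fin k → ℝ) (hQ0 : ∀ j, 0 < Q j) (hQ1 : ∑ j, Q j = 1) :
    -- the n-type P and its type class T_n(P)
    let P : Fin q → ℝ := fun i => (m i : ℝ) / n
    let T : Finset (Fin n → Fin q) :=
      Finset.univ.filter fun x => ∀ i, (Finset.univ.filter fun t => x t = i).card = m i
    -- distribution of Y^n when X^n is uniform on T and passed through the channel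
    let Pout : (Fin n → Fin k) → ℝ :=
      fun y => ((T.card : ℝ))⁻¹ * ∑ x ∈ T, ∏ t, W (x t) (y t)
    -- marginal of Y under P × P_{Y|X}
    let PY : Fin k → ℝ := fun j => ∑ i, P i * W i j
    -- ℙ[A = 1] when X^n ~ P^n, A = 1{X^n ∈ T}
    let PA : ℝ := ∑ x ∈ T, ∏ t, P (x t)
    -- ℙ[A = 1 | Y^n = y] when (X,Y)^n iid from P × P_{Y|X}
    let PAgiven : (Fin n → Fin k) → ℝ := fun y =>
      (∑ x ∈ T, ∏ t, P (x t) * W (x t) (y t)) /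
        (∑ x : Fin n → Fin q, ∏ t, P (x t) * W (x t) (y t))
    (∑ y : Fin n → Fin k, Pout y * Real.log (Pout y / ∏ t, Q (y t)))
      = n * (∑ j, PY j * Real.log (PY j / Q j))
        + ∑ y : Fin n → Fin k, Pout y * Real.log (PAgiven y / PA) :=
  divergence_fixed_type_identity_general n q k m hm W hW0 hW1 Q hQ0
end

section
/- Define the KL-divergence covering number M(k, ε) as the smallest m such that there exist distributions Q_1, …, Q_m on k symbols with max_{P ∈ Δ_{k−1}} min_i D(P‖Q_i) ≤ ε. Then for 0 < ε ≤ 1, M(k, ε) ≤ c^{k−1} ((k−1)/ε)^{(k−1)/2} for some universal constant c. -/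
open Finset
lemma term_le (a b : ℝ) (ha : 0 ≤ a) (hb : 0 < b) :
    a * Real.log (a / b) ≤ a ^ 2 / b - a := by
  rcases eq_or_lt_of_le ha with h | h
  · simp [← h]
  · have hab : 0 < a / b := div_pos h hb
    have h1 := Real.log_le_sub_one_of_pos hab
    have h2 : a * Real.log (a / b) ≤ a * (a / b - 1) :=
      mul_le_mul_of_nonneg_left h1 ha
    calc a * Real.log (a / b) ≤ a * (a / b - 1) := h2
      _ = a ^ 2 / b - a := by field_simp

lemma bin_kl (p q : ℝ) (hp0 : 0 ≤ p) (hp1 : p ≤ 1) (hq0 : 0 < q) (hq1 : q < 1) :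
    p * Real.log (p / q) + (1 - p) * Real.log ((1 - p) / (1 - q)) ≤ (p - q) ^ 2 / (q * (1 - q)) := by
  have h1 := term_le p q hp0 hq0
  have h2 := term_le (1 - p) (1 - q) (by linarith) (by linarith)
  have hqne : q ≠ 0 := hq0.ne'
  have h1qne : (1 : ℝ) - q ≠ 0 := by linarith
  have key : p ^ 2 / q - p + ((1 - p) ^ 2 / (1 - q) - (1 - p)) = (p - q) ^ 2 / (q * (1 - q)) := by
    field_simp
    ring
  linarith

lemma half_cover (ε : ℝ) (hε0 : 0 < ε) (hε1 : ε ≤ 1) (p : ℝ) (hp0 : 0 ≤ p) (hp1 : p ≤ 1 / 2) :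
    ∃ j ∈ Finset.Icc 1 ⌈Real.sqrt (25 / ε)⌉₊,
      (p - (j : ℝ) ^ 2 * (ε / 50)) ^ 2
        ≤ ε * ((j : ℝ) ^ 2 * (ε / 50) * (1 - (j : ℝ) ^ 2 * (ε / 50))) := by
  set β : ℝ := ε / 50 with hβ
  have hβ0 : 0 < β := by positivity
  set x : ℝ := Real.sqrt (p / β) with hx
  set j : ℕ := max 1 ⌈x⌉₊ with hj
  have hx0 : 0 ≤ x := Real.sqrt_nonneg _
  have hxle : x ≤ Real.sqrt (25 / ε) := by
    apply Real.sqrt_le_sqrt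
    rw [hβ, div_div_eq_mul_div]
    have h25 : p * 50 ≤ 25 := by linarith
    gcongr
  have hjn : j ∈ Finset.Icc 1 ⌈Real.sqrt (25 / ε)⌉₊ := by
    rw [Finset.mem_Icc]
    refine ⟨le_max_left _ _, max_le ?_ (Nat.ceil_le_ceil hxle)⟩
    have h5 : (5 : ℝ) ≤ Real.sqrt (25 / ε) := by
      rw [show (5:ℝ) = Real.sqrt 25 by
        rw [show (25:ℝ) = 5 ^ 2 by norm_num, Real.sqrt_sq]; norm_num]
      apply Real.sqrt_le_sqrt
      rw [le_div_iff₀ hε0]; nlinarith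
    exact Nat.one_le_ceil_iff.mpr (by linarith)
  refine ⟨j, hjn, ?_⟩
  set s : ℝ := Real.sqrt β with hs
  set t : ℝ := Real.sqrt p with ht
  have hs0 : 0 ≤ s := Real.sqrt_nonneg _
  have ht0 : 0 ≤ t := Real.sqrt_nonneg _
  have hssq : s ^ 2 = β := Real.sq_sqrt hβ0.le
  have htsq : t ^ 2 = p := Real.sq_sqrt hp0
  have hxs : x * s = t := by
    rw [hx, hs, ht, ← Real.sqrt_mul (by positivity), div_mul_cancel₀]
    exact hβ0.ne'
  have hjx1 : x ≤ (j : ℝ) := by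
    calc x ≤ (⌈x⌉₊ : ℝ) := Nat.le_ceil x
      _ ≤ (j : ℝ) := by exact_mod_cast Nat.cast_le.mpr (le_max_right _ _)
  have hjx2 : (j : ℝ) ≤ x + 1 := by
    have h1 : ((⌈x⌉₊ : ℕ) : ℝ) < x + 1 := Nat.ceil_lt_add_one hx0
    have h2 : j ≤ max 1 ⌈x⌉₊ := le_of_eq hj
    rcases max_cases 1 ⌈x⌉₊ with ⟨h, _⟩ | ⟨h, _⟩
    · rw [hj, h]; push_cast; linarith
    · rw [hj, h]; linarith
  set u : ℝ := (j : ℝ) * s with hu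
  have hlow : t ≤ u := by
    calc t = x * s := hxs.symm
      _ ≤ (j : ℝ) * s := mul_le_mul_of_nonneg_right hjx1 hs0
  have hhigh : u ≤ t + s := by
    calc u ≤ (x + 1) * s := mul_le_mul_of_nonneg_right hjx2 hs0
      _ = t + s := by rw [add_mul, one_mul, hxs]
  have hu0 : 0 ≤ u := le_trans ht0 hlow
  have hq_eq : (j : ℝ) ^ 2 * β = u ^ 2 := by rw [hu, mul_pow, hssq]
  -- q ≤ 0.72
  have htb : t ≤ Real.sqrt (1 / 2) := by rw [ht]; exact Real.sqrt_le_sqrt hp1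
  have hsb : s ≤ Real.sqrt (1 / 50) := by
    rw [hs, hβ]; apply Real.sqrt_le_sqrt; linarith
  have hA : (Real.sqrt (1/2 : ℝ)) ^ 2 = 1/2 := Real.sq_sqrt (by norm_num)
  have hC : (Real.sqrt (1/50 : ℝ)) ^ 2 = 1/50 := Real.sq_sqrt (by norm_num)
  have hAC : Real.sqrt (1/2 : ℝ) * Real.sqrt (1/50 : ℝ) = 1/10 := by
    rw [← Real.sqrt_mul (by norm_num)]
    rw [show (1/2 : ℝ) * (1/50) = (1/10) ^ 2 by norm_num]
    exact Real.sqrt_sq (by norm_num)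
  clear_value β x j s t u
  have hqle : u ^ 2 ≤ 72 / 100 := by
    have h1 : u ≤ Real.sqrt (1/2) + Real.sqrt (1/50) := by linarith
    have h2 : u * u ≤ (Real.sqrt (1/2) + Real.sqrt (1/50)) * (Real.sqrt (1/2) + Real.sqrt (1/50)) :=
      mul_le_mul h1 h1 hu0 (by positivity)
    have h3 : (Real.sqrt (1/2) + Real.sqrt (1/50)) * (Real.sqrt (1/2) + Real.sqrt (1/50)) = 72/100 := by
      linear_combination hA + 2 * hAC + hC
    calc u ^ 2 = u * u := sq u
      _ ≤ _ := h2
      _ = 72/100 := h3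
  -- (p - q)^2 ≤ 4 β q
  have ha : (u - t) * (u + t) ≤ s * (2 * u) :=
    mul_le_mul (by linarith) (by linarith) (by linarith) hs0
  have ha0 : 0 ≤ (u - t) * (u + t) := mul_nonneg (by linarith) (by linarith)
  have hsq : ((u - t) * (u + t)) ^ 2 ≤ (s * (2 * u)) ^ 2 :=
    pow_le_pow_left₀ ha0 ha 2
  have hdiff : (p - u ^ 2) ^ 2 ≤ 4 * β * u ^ 2 := by
    have e : (p - u ^ 2) ^ 2 = ((u - t) * (u + t)) ^ 2 := by rw [← htsq]; ring
    have e2 : (s * (2 * u)) ^ 2 = 4 * β * u ^ 2 := by rw [← hssq]; ring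
    rw [e, ← e2]
    exact hsq
  rw [hq_eq]
  have hfin : 4 * β * u ^ 2 ≤ ε * (u ^ 2 * (1 - u ^ 2)) := by
    rw [hβ]
    have hint : 0 ≤ (ε * u ^ 2) * (92/100 - u ^ 2) :=
      mul_nonneg (mul_nonneg hε0.le (sq_nonneg u)) (by linarith)
    nlinarith [hint]
  linarith

lemma bin_net (ε : ℝ) (hε0 : 0 < ε) (hε1 : ε ≤ 1) :
    ∃ B : Finset ℝ, (B.card : ℝ) ≤ 12 * Real.sqrt (1 / ε) ∧
      (∀ q ∈ B, 0 < q ∧ q < 1) ∧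
      ∀ p, 0 ≤ p → p ≤ 1 → ∃ q ∈ B, (p - q) ^ 2 ≤ ε * (q * (1 - q)) := by
  set n : ℕ := ⌈Real.sqrt (25 / ε)⌉₊ with hn
  set β : ℝ := ε / 50 with hβ
  have hβ0 : 0 < β := by positivity
  have hrt1 : (1 : ℝ) ≤ Real.sqrt (1 / ε) := by
    have h : (1 : ℝ) ≤ 1 / ε := by rw [le_div_iff₀ hε0]; linarith
    calc (1 : ℝ) = Real.sqrt 1 := by simp
      _ ≤ Real.sqrt (1 / ε) := Real.sqrt_le_sqrt h
  have hrtpos : 0 ≤ Real.sqrt (1 / ε) := Real.sqrt_nonneg _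
  have h25 : Real.sqrt (25 / ε) = 5 * Real.sqrt (1 / ε) := by
    rw [show (25 : ℝ) / ε = 25 * (1 / ε) by ring, Real.sqrt_mul (by norm_num),
      show (25:ℝ) = 5 ^ 2 by norm_num, Real.sqrt_sq (by norm_num)]
  have hncast : (n : ℝ) ≤ 6 * Real.sqrt (1 / ε) := by
    have h1 : (n : ℝ) < Real.sqrt (25 / ε) + 1 := Nat.ceil_lt_add_one (Real.sqrt_nonneg _)
    rw [h25] at h1
    linarith
  -- upper bound on grid values
  have hgrid : ∀ j ∈ Finset.Icc 1 n, 0 < (j : ℝ) ^ 2 * β ∧ (j : ℝ) ^ 2 * β ≤ 72 / 100 := by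
    intro j hj
    rw [Finset.mem_Icc] at hj
    have hj1 : (1 : ℝ) ≤ (j : ℝ) := by exact_mod_cast hj.1
    have hjn : (j : ℝ) ≤ (n : ℝ) := by exact_mod_cast hj.2
    constructor
    · positivity
    · have h1 : (j : ℝ) ^ 2 ≤ 36 * (Real.sqrt (1/ε)) ^ 2 := by nlinarith
      have h2 : (Real.sqrt (1/ε)) ^ 2 = 1 / ε := Real.sq_sqrt (by positivity)
      rw [h2] at h1
      have h3 : (j : ℝ) ^ 2 * β ≤ (36 * (1/ε)) * β := by
        apply mul_le_mul_of_nonneg_right h1 hβ0.le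
      rw [hβ] at h3
      have h4 : 36 * (1/ε) * (ε / 50) = 36 / 50 := by field_simp
      rw [h4] at h3
      rw [hβ]
      linarith
  set f : ℕ → ℝ := fun j => (j : ℝ) ^ 2 * β with hf
  set g : ℕ → ℝ := fun j => 1 - (j : ℝ) ^ 2 * β with hg
  refine ⟨(Finset.Icc 1 n).image f ∪ (Finset.Icc 1 n).image g, ?_, ?_, ?_⟩
  · have hc : ((Finset.Icc 1 n).image f ∪ (Finset.Icc 1 n).image g).card ≤ n + n := by
      calc _ ≤ ((Finset.Icc 1 n).image f).card + ((Finset.Icc 1 n).image g).card :=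
            Finset.card_union_le _ _
        _ ≤ (Finset.Icc 1 n).card + (Finset.Icc 1 n).card :=
            Nat.add_le_add (Finset.card_image_le) (Finset.card_image_le)
        _ ≤ n + n := by rw [Nat.card_Icc]; omega
    calc (((Finset.Icc 1 n).image f ∪ (Finset.Icc 1 n).image g).card : ℝ)
        ≤ ((n : ℝ) + n) := by exact_mod_cast hc
      _ ≤ 12 * Real.sqrt (1 / ε) := by linarith
  · intro q hq
    rw [Finset.mem_union, Finset.mem_image, Finset.mem_image] at hq
    rcases hq with ⟨j, hj, rfl⟩ | ⟨j, hj, rfl⟩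
    · obtain ⟨h1, h2⟩ := hgrid j hj
      exact ⟨h1, by simp only [hf]; linarith⟩
    · obtain ⟨h1, h2⟩ := hgrid j hj
      exact ⟨by simp only [hg]; linarith, by simp only [hg]; linarith⟩
  · intro p hp0 hp1
    rcases le_or_gt p (1/2) with hhalf | hhalf
    · obtain ⟨j, hj, hcov⟩ := half_cover ε hε0 hε1 p hp0 hhalf
      refine ⟨f j, Finset.mem_union_left _ (Finset.mem_image_of_mem f hj), ?_⟩
      simpa [hf, hβ] using hcov
    · obtain ⟨j, hj, hcov⟩ := half_cover ε hε0 hε1 (1 - p) (by linarith) (by linarith)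
      refine ⟨g j, Finset.mem_union_right _ (Finset.mem_image_of_mem g hj), ?_⟩
      simp only [hg]
      have e1 : (p - (1 - (j:ℝ) ^ 2 * β)) ^ 2 = ((1 - p) - (j:ℝ) ^ 2 * β) ^ 2 := by ring
      have e2 : (1 - (j:ℝ) ^ 2 * β) * (1 - (1 - (j:ℝ) ^ 2 * β))
          = (j:ℝ) ^ 2 * β * (1 - (j:ℝ) ^ 2 * β) := by ring
      rw [e1, e2]
      simpa [hβ] using hcov

lemma simplex_cover (ε : ℝ) (hε : 0 < ε) (B : Finset ℝ)
    (hBpos : ∀ q ∈ B, 0 < q ∧ q < 1)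
    (hBcov : ∀ p, 0 ≤ p → p ≤ 1 → ∃ q ∈ B, (p - q) ^ 2 ≤ ε * (q * (1 - q))) :
    ∀ k : ℕ, ∃ N : Finset (Fin (k + 1) → ℝ), N.Nonempty ∧ N.card ≤ B.card ^ k ∧
      (∀ Q ∈ N, (∀ j, 0 < Q j) ∧ ∑ j, Q j = 1) ∧
      ∀ P : Fin (k + 1) → ℝ, (∀ i, 0 ≤ P i) → ∑ i, P i = 1 →
        ∃ Q ∈ N, ∑ i, P i * Real.log (P i / Q i) ≤ k * ε := by
  intro k
  induction k with
  | zero =>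
    refine ⟨{fun _ => 1}, ⟨_, Finset.mem_singleton_self _⟩, by simp, ?_, ?_⟩
    · intro Q hQ
      rw [Finset.mem_singleton] at hQ
      subst hQ
      exact ⟨fun j => one_pos, by simp⟩
    · intro P hP hsum
      refine ⟨fun _ => 1, Finset.mem_singleton_self _, ?_⟩
      have h0 : P 0 = 1 := by simpa [Fin.sum_univ_one] using hsum
      simp [Fin.sum_univ_one, h0]
  | succ k IH =>
    obtain ⟨N', hne', hcard', hmem', hcov'⟩ := IH
    set F : ℝ × (Fin (k + 1) → ℝ) → (Fin (k + 2) → ℝ) :=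
      fun pr => Fin.cons pr.1 (fun j => (1 - pr.1) * pr.2 j) with hF
    refine ⟨(B ×ˢ N').image F, ?_, ?_, ?_, ?_⟩
    · obtain ⟨Q0, hQ0⟩ := hne'
      obtain ⟨q0, hq0B, _⟩ := hBcov (1/2) (by norm_num) (by norm_num)
      exact ⟨F (q0, Q0), Finset.mem_image_of_mem F (Finset.mem_product.mpr ⟨hq0B, hQ0⟩)⟩
    · calc ((B ×ˢ N').image F).card ≤ (B ×ˢ N').card := Finset.card_image_le
        _ = B.card * N'.card := Finset.card_product _ _
        _ ≤ B.card * B.card ^ k := Nat.mul_le_mul_left _ hcard'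
        _ = B.card ^ (k + 1) := (pow_succ' _ _).symm
    · intro Q hQ
      rw [Finset.mem_image] at hQ
      obtain ⟨⟨q, Q'⟩, hmem, rfl⟩ := hQ
      rw [Finset.mem_product] at hmem
      obtain ⟨hq0, hq1⟩ := hBpos q hmem.1
      obtain ⟨hQ'pos, hQ'sum⟩ := hmem' Q' hmem.2
      constructor
      · intro j
        refine Fin.cases ?_ ?_ j
        · simpa [hF] using hq0
        · intro i
          simp only [hF, Fin.cons_succ]
          exact mul_pos (by linarith) (hQ'pos i)
      · rw [Fin.sum_univ_succ]
        simp only [hF, Fin.cons_zero, Fin.cons_succ]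
        rw [← Finset.mul_sum, hQ'sum]
        ring
    · intro P hP hsum
      have hsum' : P 0 + ∑ i : Fin (k + 1), P i.succ = 1 := by
        rw [← Fin.sum_univ_succ]; exact hsum
      have hp0 : 0 ≤ P 0 := hP 0
      have htail0 : 0 ≤ ∑ i : Fin (k + 1), P i.succ :=
        Finset.sum_nonneg fun i _ => hP i.succ
      have hp1 : P 0 ≤ 1 := by linarith
      obtain ⟨q, hqB, hqcov⟩ := hBcov (P 0) hp0 hp1
      obtain ⟨hq0, hq1⟩ := hBpos q hqB
      have hqq : 0 < q * (1 - q) := mul_pos hq0 (by linarith)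
      have hd : P 0 * Real.log (P 0 / q) + (1 - P 0) * Real.log ((1 - P 0) / (1 - q)) ≤ ε := by
        calc P 0 * Real.log (P 0 / q) + (1 - P 0) * Real.log ((1 - P 0) / (1 - q))
            ≤ (P 0 - q) ^ 2 / (q * (1 - q)) := bin_kl _ _ hp0 hp1 hq0 hq1
          _ ≤ ε := by rw [div_le_iff₀ hqq]; linarith [hqcov]
      have hk0 : (0 : ℝ) ≤ (k : ℝ) := Nat.cast_nonneg k
      by_cases hp : P 0 = 1
      · -- tail is zero
        have htz : ∑ i : Fin (k + 1), P i.succ = 0 := by rw [hp] at hsum'; linarith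
        have hzero : ∀ i : Fin (k + 1), P i.succ = 0 := fun i =>
          (Finset.sum_eq_zero_iff_of_nonneg (fun i _ => hP i.succ)).1 htz i (Finset.mem_univ i)
        obtain ⟨Q0, hQ0⟩ := hne'
        refine ⟨F (q, Q0), Finset.mem_image_of_mem F
          (Finset.mem_product.mpr ⟨hqB, hQ0⟩), ?_⟩
        rw [Fin.sum_univ_succ]
        simp only [hF, Fin.cons_zero, Fin.cons_succ]
        have hts : ∑ i : Fin (k + 1), P i.succ * Real.log (P i.succ / ((1 - q) * Q0 i)) = 0 :=
          Finset.sum_eq_zero fun i _ => by rw [hzero i, zero_mul]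
        rw [hts, hp]
        rw [hp] at hd
        push_cast
        nlinarith [hd, hε, mul_nonneg hk0 hε.le]
      · have hp1' : P 0 < 1 := lt_of_le_of_ne hp1 hp
        have h1p : 0 < 1 - P 0 := by linarith
        have htail : ∑ i : Fin (k + 1), P i.succ = 1 - P 0 := by linarith
        set P' : Fin (k + 1) → ℝ := fun i => P i.succ / (1 - P 0) with hP'
        have hP'0 : ∀ i, 0 ≤ P' i := fun i => div_nonneg (hP i.succ) h1p.le
        have hP'sum : ∑ i, P' i = 1 := by
          simp only [hP']
          rw [← Finset.sum_div, htail, div_self h1p.ne']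
        obtain ⟨Q', hQ'N, hD'⟩ := hcov' P' hP'0 hP'sum
        obtain ⟨hQ'pos, hQ'sum⟩ := hmem' Q' hQ'N
        refine ⟨F (q, Q'), Finset.mem_image_of_mem F
          (Finset.mem_product.mpr ⟨hqB, hQ'N⟩), ?_⟩
        rw [Fin.sum_univ_succ]
        simp only [hF, Fin.cons_zero, Fin.cons_succ]
        have key : ∀ i : Fin (k + 1),
            P i.succ * Real.log (P i.succ / ((1 - q) * Q' i))
              = P i.succ * Real.log ((1 - P 0) / (1 - q))
                + (1 - P 0) * (P' i * Real.log (P' i / Q' i)) := by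
          intro i
          rcases eq_or_lt_of_le (hP i.succ) with h0 | h0
          · rw [← h0]
            simp [hP', ← h0]
          · have hQi : 0 < Q' i := hQ'pos i
            have hP'i : 0 < P' i := div_pos h0 h1p
            have e2 : (1 - P 0) * P' i = P i.succ := by
              simp only [hP']
              field_simp
            have h1q : (0:ℝ) < 1 - q := by linarith
            have e1 : P i.succ / ((1 - q) * Q' i) = ((1 - P 0) / (1 - q)) * (P' i / Q' i) := by
              rw [← e2]
              field_simp
              try ring
            rw [e1, Real.log_mul (div_pos h1p h1q).ne' (div_pos hP'i hQi).ne', mul_add]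
            congr 1
            rw [← e2]
            ring
        rw [Finset.sum_congr rfl fun i _ => key i, Finset.sum_add_distrib,
          ← Finset.sum_mul, ← Finset.mul_sum, htail]
        have h2 : (1 - P 0) * (∑ i, P' i * Real.log (P' i / Q' i)) ≤ (k : ℝ) * ε := by
          rcases le_or_gt (∑ i, P' i * Real.log (P' i / Q' i)) 0 with h | h
          · have : (1 - P 0) * (∑ i, P' i * Real.log (P' i / Q' i)) ≤ 0 :=
              mul_nonpos_of_nonneg_of_nonpos h1p.le h
            have hkε : 0 ≤ (k : ℝ) * ε := by positivity
            linarith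
          · have h3 : (1 - P 0) * (∑ i, P' i * Real.log (P' i / Q' i))
                ≤ 1 * (∑ i, P' i * Real.log (P' i / Q' i)) :=
              mul_le_mul_of_nonneg_right (by linarith) h.le
            rw [one_mul] at h3
            linarith
        push_cast
        linarith

/-- Upper bound on the KL-divergence covering number of the probability simplex:
there is a universal constant c such that for 0 < ε ≤ 1 the simplex Δ_{k-1} admits a
set of at most c^{k-1}((k-1)/ε)^{(k-1)/2} centers covering it within KL radius ε. -/
theorem divergence_covering_bound :
    ∃ c : ℝ, 0 < c ∧ ∀ k : ℕ, 1 ≤ k → ∀ ε : ℝ, 0 < ε → ε ≤ 1 →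
      ∃ N : Finset (Fin k → ℝ),
        (N.card : ℝ) ≤ c ^ (k - 1) * (((k : ℝ) - 1) / ε) ^ (((k : ℝ) - 1) / 2) ∧
        (∀ Q ∈ N, (∀ j, 0 < Q j) ∧ ∑ j, Q j = 1) ∧
        ∀ P : Fin k → ℝ, (∀ i, 0 ≤ P i) → ∑ i, P i = 1 →
          ∃ Q ∈ N, ∑ i, P i * Real.log (P i / Q i) ≤ ε := by
  refine ⟨12, by norm_num, ?_⟩
  intro k hk ε hε0 hε1
  obtain ⟨m, rfl⟩ : ∃ m, k = m + 1 := ⟨k - 1, (Nat.succ_pred_eq_of_pos hk).symm⟩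
  rcases Nat.eq_zero_or_pos m with hm | hm
  · subst hm
    obtain ⟨B, hBcard, hBpos, hBcov⟩ := bin_net ε hε0 hε1
    obtain ⟨N, hne, hcard, hmem, hcov⟩ := simplex_cover ε hε0 B hBpos hBcov 0
    refine ⟨N, ?_, hmem, ?_⟩
    · have h1 : N.card ≤ 1 := by simpa using hcard
      have h1' : (N.card : ℝ) ≤ 1 := by exact_mod_cast h1
      have e0 : (((0 + 1 : ℕ) : ℝ) - 1) = 0 := by norm_num
      rw [e0]
      norm_num [Real.rpow_zero]
      exact h1
    · intro P hP hsum
      obtain ⟨Q, hQ, hle⟩ := hcov P hP hsum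
      refine ⟨Q, hQ, hle.trans ?_⟩
      push_cast
      linarith
  · have hm1 : (1 : ℝ) ≤ (m : ℝ) := by exact_mod_cast hm
    have hm0 : (0 : ℝ) < (m : ℝ) := by linarith
    set ε' := ε / m with hε'
    have hε'0 : 0 < ε' := div_pos hε0 hm0
    have hε'1 : ε' ≤ 1 := by rw [hε', div_le_one hm0]; linarith
    obtain ⟨B, hBcard, hBpos, hBcov⟩ := bin_net ε' hε'0 hε'1
    obtain ⟨N, hne, hcard, hmem, hcov⟩ := simplex_cover ε' hε'0 B hBpos hBcov m
    refine ⟨N, ?_, hmem, ?_⟩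
    · have h1 : (N.card : ℝ) ≤ (B.card : ℝ) ^ m := by exact_mod_cast hcard
      have h2 : (B.card : ℝ) ^ m ≤ (12 * Real.sqrt (1 / ε')) ^ m :=
        pow_le_pow_left₀ (Nat.cast_nonneg _) hBcard m
      have h3 : (1 : ℝ) / ε' = (m : ℝ) / ε := by rw [hε', one_div_div]
      have hmε : (0 : ℝ) ≤ (m : ℝ) / ε := by positivity
      have h4 : Real.sqrt ((m : ℝ) / ε) ^ m = ((m : ℝ) / ε) ^ (((m : ℝ)) / 2) := by
        rw [Real.sqrt_eq_rpow, ← Real.rpow_natCast (((m : ℝ) / ε) ^ ((1 : ℝ) / 2)) m,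
          ← Real.rpow_mul hmε]
        norm_num
        rw [div_mul_eq_mul_div, one_mul]
      have h5 : (12 * Real.sqrt (1 / ε')) ^ m = 12 ^ m * ((m : ℝ) / ε) ^ (((m : ℝ)) / 2) := by
        rw [mul_pow, h3, h4]
      have egoal1 : (m + 1 - 1 : ℕ) = m := by omega
      have egoal2 : (((m + 1 : ℕ) : ℝ) - 1) = (m : ℝ) := by push_cast; ring
      rw [egoal1, egoal2]
      calc (N.card : ℝ) ≤ (B.card : ℝ) ^ m := h1
        _ ≤ (12 * Real.sqrt (1 / ε')) ^ m := h2
        _ = 12 ^ m * ((m : ℝ) / ε) ^ (((m : ℝ)) / 2) := h5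
    · intro P hP hsum
      obtain ⟨Q, hQ, hle⟩ := hcov P hP hsum
      refine ⟨Q, hQ, hle.trans ?_⟩
      rw [hε', mul_div_assoc']
      rw [mul_comm, mul_div_assoc, div_self hm0.ne', mul_one]
end

section
/- For the binary simplex: for every ε with 0 < ε ≤ 1 there exists a finite set N ⊂ Δ_1 of size at most c/√ε (for a universal constant c, e.g. c = 7·√18) such that every distribution p = (p_1, 1−p_1) on two symbols satisfies min_{q ∈ N} D(p‖q) ≤ ε. -/
open Finset

lemma kl_le_chi2 (p x : ℝ) (hp0 : 0 ≤ p) (hp1 : p ≤ 1) (hx0 : 0 < x) (hx1 : x < 1) :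
    p * Real.log (p / x) + (1 - p) * Real.log ((1 - p) / (1 - x)) ≤
      (p - x) ^ 2 / (x * (1 - x)) := by
  have key : ∀ a b : ℝ, 0 ≤ a → 0 < b → a * Real.log (a / b) ≤ a * ((a - b) / b) := by
    intro a b ha hb
    rcases eq_or_lt_of_le ha with h | h
    · simp [← h]
    · have h1 := Real.log_le_sub_one_of_pos (div_pos h hb)
      have h2 : a / b - 1 = (a - b) / b := by field_simp
      exact mul_le_mul_of_nonneg_left (by linarith) ha
  have h1 := key p x hp0 hx0
  have h2 := key (1 - p) (1 - x) (by linarith) (by linarith)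
  have hx0' : x ≠ 0 := ne_of_gt hx0
  have hx1' : (1 : ℝ) - x ≠ 0 := by intro h; linarith [h]
  have heq : p * ((p - x) / x) + (1 - p) * (((1 - p) - (1 - x)) / (1 - x)) =
      (p - x) ^ 2 / (x * (1 - x)) := by
    field_simp
    ring
  linarith

lemma kl_bound (ε p x : ℝ) (hp0 : 0 ≤ p) (hp1 : p ≤ 1) (hx0 : 0 < x) (hx1 : x < 1)
    (h : (p - x) ^ 2 ≤ ε * (x * (1 - x))) :
    p * Real.log (p / x) + (1 - p) * Real.log ((1 - p) / (1 - x)) ≤ ε := by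
  have h1 := kl_le_chi2 p x hp0 hp1 hx0 hx1
  have h2 : (p - x) ^ 2 / (x * (1 - x)) ≤ ε := by
    rw [div_le_iff₀ (by nlinarith)]
    linarith [h]
  linarith

set_option maxHeartbeats 1600000 in
lemma cover_low (ε : ℝ) (hε : 0 < ε) (hε1 : ε ≤ 1) (p : ℝ) (hp0 : 0 ≤ p) (hp : p ≤ 1 / 2) :
    ∃ i ∈ Finset.range (⌊3 / Real.sqrt ε⌋₊ + 1),
      (p - min (ε / 18 * (i + 1) ^ 2) (1 / 2)) ^ 2 ≤
        ε * (min (ε / 18 * (i + 1) ^ 2) (1 / 2) *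
          (1 - min (ε / 18 * (i + 1) ^ 2) (1 / 2))) := by
  set s := Real.sqrt ε with hs
  have hs0 : 0 < s := Real.sqrt_pos.mpr hε
  have hss : s * s = ε := Real.mul_self_sqrt hε.le
  have hs1 : s ≤ 1 := by nlinarith
  set t := Real.sqrt (p / (ε / 18)) with ht
  have ht0 : 0 ≤ t := Real.sqrt_nonneg _
  have htsq : t ^ 2 = p / (ε / 18) := Real.sq_sqrt (by positivity)
  have hpeq : p = ε / 18 * t ^ 2 := by
    field_simp at htsq
    linarith
  set k := ⌊t⌋₊ with hk
  have hkt : (k : ℝ) ≤ t := Nat.floor_le ht0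
  have htk : t < (k : ℝ) + 1 := Nat.lt_floor_add_one t
  have hk0 : (0 : ℝ) ≤ (k : ℝ) := Nat.cast_nonneg k
  have hts : t ≤ 3 / s := by
    have h18 : p / (ε / 18) ≤ 9 / ε := by
      rw [div_le_div_iff₀ (by positivity) hε]
      nlinarith
    have h9 : Real.sqrt (9 / ε) = 3 / s := by
      rw [hs, show (9 : ℝ) / ε = (3 / Real.sqrt ε) ^ 2 by
        rw [div_pow]; rw [Real.sq_sqrt hε.le]; norm_num]
      exact Real.sqrt_sq (by positivity)
    rw [ht, ← h9]
    exact Real.sqrt_le_sqrt h18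
  refine ⟨k, ?_, ?_⟩
  · simp only [Finset.mem_range]
    have : k ≤ ⌊3 / s⌋₊ := Nat.floor_le_floor (by linarith)
    omega
  clear_value k t s
  have ht2 : t ^ 2 ≤ ((k : ℝ) + 1) ^ 2 := pow_le_pow_left₀ ht0 htk.le 2
  have hk2 : (k : ℝ) ^ 2 ≤ t ^ 2 := pow_le_pow_left₀ hk0 hkt 2
  have hple : p ≤ ε / 18 * ((k : ℝ) + 1) ^ 2 := by
    have := mul_le_mul_of_nonneg_left ht2 (by positivity : (0 : ℝ) ≤ ε / 18)
    linarith
  have hsub : ε / 18 * ((k : ℝ) + 1) ^ 2 - p ≤ ε / 18 * (2 * (k : ℝ) + 1) := by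
    have h1 : ((k : ℝ) + 1) ^ 2 - t ^ 2 ≤ 2 * (k : ℝ) + 1 := by nlinarith
    have := mul_le_mul_of_nonneg_left h1 (by positivity : (0 : ℝ) ≤ ε / 18)
    nlinarith
  by_cases hc : ε / 18 * ((k : ℝ) + 1) ^ 2 ≤ 1 / 2
  · rw [min_eq_left hc]
    have hx2 : (1 : ℝ) - ε / 18 * ((k : ℝ) + 1) ^ 2 ≥ 1 / 2 := by linarith
    have h6 : (ε / 18 * ((k : ℝ) + 1) ^ 2 - p) ^ 2 ≤ (ε / 18 * (2 * (k : ℝ) + 1)) ^ 2 :=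
      pow_le_pow_left₀ (by linarith) hsub 2
    have h7 : (2 * (k : ℝ) + 1) ^ 2 ≤ 9 * ((k : ℝ) + 1) ^ 2 := by nlinarith
    have h7' := mul_le_mul_of_nonneg_left h7 (by positivity : (0 : ℝ) ≤ ε ^ 2 / 324)
    have h8 : ε * (ε / 18 * ((k : ℝ) + 1) ^ 2) * (1 / 2) ≤
        ε * (ε / 18 * ((k : ℝ) + 1) ^ 2) * (1 - ε / 18 * ((k : ℝ) + 1) ^ 2) := by
      apply mul_le_mul_of_nonneg_left (by linarith) (by positivity)
    linarith [h6, h7', h8]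
  · rw [min_eq_right (by linarith)]
    push_neg at hc
    have h1 : 1 / 2 - p ≤ ε / 18 * (2 * (k : ℝ) + 1) := by linarith
    have hks : (k : ℝ) * s ≤ 3 := by
      have h := le_trans hkt hts
      rw [le_div_iff₀ hs0] at h
      exact h
    have hq : 1 / 2 - p ≤ s * s / 18 * (2 * (k : ℝ) + 1) := by rw [hss]; exact h1
    have hq2 : s * s / 18 * (2 * (k : ℝ) + 1) ≤ 7 * s / 18 := by
      have hA : (k : ℝ) * s * s ≤ 3 * s := mul_le_mul_of_nonneg_right hks hs0.le
      have hB : s * s ≤ s * 1 := mul_le_mul_of_nonneg_left hs1 hs0.le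
      linarith [hA, hB]
    have h4 : 1 / 2 - p ≤ 7 * s / 18 := le_trans hq hq2
    have hhp : (0:ℝ) ≤ 1 / 2 - p := by linarith
    have h5' : (1 / 2 - p) ^ 2 ≤ (7 * s / 18) ^ 2 := pow_le_pow_left₀ hhp h4 2
    have h5 : (1 / 2 - p) ^ 2 ≤ 49 / 324 * ε := by
      have he : (7 * s / 18) ^ 2 = 49 / 324 * ε := by rw [← hss]; ring
      linarith [h5', he.le]
    linarith [h5]

/-- KL covering of the binary simplex: there is a universal constant c such that for every
0 < ε ≤ 1 there is a set N ⊂ (0,1) of at most c/√ε points such that every Bernoulli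
distribution (p, 1-p) is within KL divergence ε of some (x, 1-x) with x ∈ N. -/
theorem binary_divergence_covering :
    ∃ c : ℝ, 0 < c ∧ ∀ ε : ℝ, 0 < ε → ε ≤ 1 →
      ∃ N : Finset ℝ,
        (N.card : ℝ) ≤ c / Real.sqrt ε ∧
        (∀ x ∈ N, 0 < x ∧ x < 1) ∧
        ∀ p : ℝ, 0 ≤ p → p ≤ 1 →
          ∃ x ∈ N,
            p * Real.log (p / x) + (1 - p) * Real.log ((1 - p) / (1 - x)) ≤ ε := by
  refine ⟨8, by norm_num, fun ε hε hε1 => ?_⟩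
  have hs0 : 0 < Real.sqrt ε := Real.sqrt_pos.mpr hε
  have hs1 : Real.sqrt ε ≤ 1 := by
    rw [show (1 : ℝ) = Real.sqrt 1 by simp]
    exact Real.sqrt_le_sqrt hε1
  set m : ℕ := ⌊3 / Real.sqrt ε⌋₊ + 1 with hm
  set f : ℕ → ℝ := fun i => min (ε / 18 * ((i : ℝ) + 1) ^ 2) (1 / 2) with hf
  set G : Finset ℝ := (Finset.range m).image f with hG
  have hGmem : ∀ x ∈ G, 0 < x ∧ x < 1 := by
    intro x hx
    rw [hG, Finset.mem_image] at hx
    obtain ⟨i, _, rfl⟩ := hx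
    refine ⟨lt_min (by positivity) (by norm_num), ?_⟩
    exact lt_of_le_of_lt (min_le_right _ _) (by norm_num)
  refine ⟨G ∪ G.image (fun x => 1 - x), ?_, ?_, ?_⟩
  · have h1 : (G ∪ G.image (fun x => 1 - x)).card ≤ 2 * m := by
      have hGc : G.card ≤ m := le_trans Finset.card_image_le (by simp)
      calc (G ∪ G.image (fun x => 1 - x)).card
          ≤ G.card + (G.image (fun x => 1 - x)).card := Finset.card_union_le _ _
        _ ≤ G.card + G.card := by
            have := Finset.card_image_le (s := G) (f := fun x => 1 - x)
            omega
        _ ≤ 2 * m := by omega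
    have h2 : (m : ℝ) ≤ 4 / Real.sqrt ε := by
      have hfl : (⌊3 / Real.sqrt ε⌋₊ : ℝ) ≤ 3 / Real.sqrt ε :=
        Nat.floor_le (by positivity)
      have hone : (1 : ℝ) ≤ 1 / Real.sqrt ε := by
        rw [le_div_iff₀ hs0]; linarith
      have : (m : ℝ) = (⌊3 / Real.sqrt ε⌋₊ : ℝ) + 1 := by rw [hm]; push_cast; ring
      rw [this]
      have : 3 / Real.sqrt ε + 1 / Real.sqrt ε = 4 / Real.sqrt ε := by ring
      linarith
    calc ((G ∪ G.image (fun x => 1 - x)).card : ℝ) ≤ (2 * m : ℕ) := by exact_mod_cast h1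
      _ = 2 * (m : ℝ) := by push_cast; ring
      _ ≤ 2 * (4 / Real.sqrt ε) := by linarith
      _ = 8 / Real.sqrt ε := by ring
  · intro x hx
    rw [Finset.mem_union] at hx
    rcases hx with hx | hx
    · exact hGmem x hx
    · rw [Finset.mem_image] at hx
      obtain ⟨y, hy, rfl⟩ := hx
      obtain ⟨hy0, hy1⟩ := hGmem y hy
      constructor <;> linarith
  · intro p hp0 hp1
    by_cases hp : p ≤ 1 / 2
    · obtain ⟨i, hi, hcov⟩ := cover_low ε hε hε1 p hp0 hp
      refine ⟨f i, Finset.mem_union_left _ (Finset.mem_image_of_mem f hi), ?_⟩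
      obtain ⟨hx0, hx1⟩ := hGmem (f i) (by rw [hG]; exact Finset.mem_image_of_mem f hi)
      exact kl_bound ε p (f i) hp0 hp1 hx0 hx1 hcov
    · push_neg at hp
      obtain ⟨i, hi, hcov⟩ := cover_low ε hε hε1 (1 - p) (by linarith) (by linarith)
      refine ⟨1 - f i, Finset.mem_union_right _
        (Finset.mem_image_of_mem _ (Finset.mem_image_of_mem f hi)), ?_⟩
      obtain ⟨hx0, hx1⟩ := hGmem (f i) (by rw [hG]; exact Finset.mem_image_of_mem f hi)
      have hcov' : (p - (1 - f i)) ^ 2 ≤ ε * ((1 - f i) * (1 - (1 - f i))) := by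
        have h1 : (p - (1 - f i)) ^ 2 = ((1 - p) - f i) ^ 2 := by ring
        have h2 : ε * ((1 - f i) * (1 - (1 - f i))) = ε * (f i * (1 - f i)) := by ring
        rw [h1, h2]
        exact hcov
      exact kl_bound ε p (1 - f i) hp0 hp1 (by linarith) (by linarith) hcov'
end

section
/- Let B ⊂ Δ_{k−1} be the image of Δ_{q−1} under a stochastic matrix F of rank ℓ. Then M(k, ε, B) ≤ C(q, ℓ) · M(ℓ, ε), where one may take C(q, ℓ) = binomial(q, ℓ): B can be partitioned (covered) by at most binomial(q, ℓ) simplices, each the convex hull of ℓ of the q extreme points (rows of F), and each such simplex is the stochastic image of Δ_{ℓ−1}. -/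
open Finset

/-- The log-sum inequality. -/
lemma logsum_aux {ι : Type*} (s : Finset ι) (x y : ι → ℝ)
    (hx : ∀ i ∈ s, 0 ≤ x i) (hy : ∀ i ∈ s, 0 ≤ y i)
    (hxy : ∀ i ∈ s, y i = 0 → x i = 0) :
    (∑ i ∈ s, x i) * Real.log ((∑ i ∈ s, x i) / (∑ i ∈ s, y i)) ≤
      ∑ i ∈ s, x i * Real.log (x i / y i) := by
  classical
  set t := s.filter fun i => 0 < y i with ht
  have hts : t ⊆ s := filter_subset _ _
  have hx0 : ∀ i ∈ s, i ∉ t → x i = 0 := by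
    intro i hi hit
    apply hxy i hi
    have : ¬ 0 < y i := by
      intro h; exact hit (mem_filter.2 ⟨hi, h⟩)
    linarith [hy i hi]
  have hxsum : ∑ i ∈ s, x i = ∑ i ∈ t, x i :=
    (Finset.sum_subset hts (fun i hi hit => hx0 i hi hit)).symm
  have hysum : ∑ i ∈ s, y i = ∑ i ∈ t, y i := by
    refine (Finset.sum_subset hts ?_).symm
    intro i hi hit
    have : ¬ 0 < y i := fun h => hit (mem_filter.2 ⟨hi, h⟩)
    linarith [hy i hi]
  have hrsum : ∑ i ∈ s, x i * Real.log (x i / y i) =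
      ∑ i ∈ t, x i * Real.log (x i / y i) := by
    refine (Finset.sum_subset hts ?_).symm
    intro i hi hit
    rw [hx0 i hi hit, zero_mul]
  rw [hxsum, hysum, hrsum]
  have hyt : ∀ i ∈ t, 0 < y i := fun i hi => (mem_filter.1 hi).2
  have hxt : ∀ i ∈ t, 0 ≤ x i := fun i hi => hx i (hts hi)
  by_cases hX : ∑ i ∈ t, x i = 0
  · have hx00 : ∀ i ∈ t, x i = 0 :=
      (Finset.sum_eq_zero_iff_of_nonneg hxt).1 hX
    rw [hX, zero_mul]
    apply Finset.sum_nonneg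
    intro i hi
    rw [hx00 i hi, zero_mul]
  · have hXpos : 0 < ∑ i ∈ t, x i :=
      lt_of_le_of_ne (Finset.sum_nonneg hxt) (Ne.symm hX)
    have htne : t.Nonempty := by
      by_contra h
      rw [not_nonempty_iff_eq_empty] at h
      rw [h, Finset.sum_empty] at hX
      exact hX rfl
    have hYpos : 0 < ∑ i ∈ t, y i := Finset.sum_pos hyt htne
    set X := ∑ i ∈ t, x i
    set Y := ∑ i ∈ t, y i
    have hYne : Y ≠ 0 := ne_of_gt hYpos
    have hw0 : ∀ i ∈ t, 0 ≤ y i / Y := fun i hi =>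
      div_nonneg (le_of_lt (hyt i hi)) (le_of_lt hYpos)
    have hw1 : ∑ i ∈ t, y i / Y = 1 := by
      rw [← Finset.sum_div, div_self hYne]
    have hmem : ∀ i ∈ t, x i / y i ∈ Set.Ici (0 : ℝ) := fun i hi =>
      div_nonneg (hxt i hi) (le_of_lt (hyt i hi))
    have hj := Real.convexOn_mul_log.map_sum_le hw0 hw1 hmem
    have hterm : ∀ i ∈ t, y i / Y * (x i / y i) = x i / Y := by
      intro i hi
      have hyi : y i ≠ 0 := ne_of_gt (hyt i hi)
      rw [div_mul_div_comm, mul_comm Y (y i), mul_div_mul_left _ _ hyi]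
    have hsum_eq : ∑ i ∈ t, (y i / Y) • (x i / y i) = X / Y := by
      simp only [smul_eq_mul]
      rw [Finset.sum_congr rfl hterm, ← Finset.sum_div]
    rw [hsum_eq] at hj
    have hj2 : X / Y * Real.log (X / Y) ≤
        (∑ i ∈ t, x i * Real.log (x i / y i)) / Y := by
      refine hj.trans_eq ?_
      rw [Finset.sum_div]
      refine Finset.sum_congr rfl fun i hi => ?_
      rw [smul_eq_mul, ← mul_assoc, hterm i hi, div_mul_eq_mul_div]
    have hXY : X / Y * Real.log (X / Y) * Y = X * Real.log (X / Y) := by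
      rw [mul_right_comm, div_mul_cancel₀ _ hYne]
    have h := mul_le_mul_of_nonneg_right hj2 (le_of_lt hYpos)
    rw [hXY, div_mul_cancel₀ _ hYne] at h
    exact h

/-- Pushing two distributions through a stochastic family of rows contracts KL
(data processing / log-sum inequality). -/
lemma kl_push_aux {l k : ℕ} (G : Fin l → Fin k → ℝ) (hG0 : ∀ a j, 0 ≤ G a j)
    (p r : Fin l → ℝ) (hp : ∀ a, 0 ≤ p a) (hr : ∀ a, 0 < r a) :
    ∑ j, (∑ a, p a * G a j) * Real.log ((∑ a, p a * G a j) / (∑ a, r a * G a j)) ≤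
      ∑ a, (∑ j, G a j) * (p a * Real.log (p a / r a)) := by
  have key : ∀ j : Fin k,
      (∑ a, p a * G a j) * Real.log ((∑ a, p a * G a j) / (∑ a, r a * G a j)) ≤
        ∑ a, G a j * (p a * Real.log (p a / r a)) := by
    intro j
    have h := logsum_aux Finset.univ (fun a => p a * G a j) (fun a => r a * G a j)
      (fun a _ => mul_nonneg (hp a) (hG0 a j))
      (fun a _ => mul_nonneg (le_of_lt (hr a)) (hG0 a j))
      (fun a _ hy => by
        have hy' : r a * G a j = 0 := hy
        have hGa : G a j = 0 := by
          rcases mul_eq_zero.1 hy' with h' | h'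
          · exact absurd h' (ne_of_gt (hr a))
          · exact h'
        show p a * G a j = 0
        rw [hGa, mul_zero])
    have h' : (∑ a, p a * G a j) * Real.log ((∑ a, p a * G a j) / (∑ a, r a * G a j)) ≤
        ∑ a, (p a * G a j) * Real.log ((p a * G a j) / (r a * G a j)) := h
    refine h'.trans_eq ?_
    refine Finset.sum_congr rfl fun a _ => ?_
    by_cases hG : G a j = 0
    · simp [hG]
    · have : p a * G a j / (r a * G a j) = p a / r a :=
        mul_div_mul_right _ _ hG
      rw [this]; ring
  calc ∑ j, (∑ a, p a * G a j) * Real.log ((∑ a, p a * G a j) / (∑ a, r a * G a j))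
      ≤ ∑ j, ∑ a, G a j * (p a * Real.log (p a / r a)) :=
        Finset.sum_le_sum fun j _ => key j
    _ = ∑ a, (∑ j, G a j) * (p a * Real.log (p a / r a)) := by
        rw [Finset.sum_comm]
        exact Finset.sum_congr rfl fun a _ => by rw [Finset.sum_mul]

/-- A linearly independent set of rows of `F` has cardinality at most `F.rank`. -/
lemma rows_card_le_rank {q k : ℕ} (F : Matrix (Fin q) (Fin k) ℝ)
    (S : Finset (Fin q)) (h : LinearIndependent ℝ (fun i : S => F i)) :
    S.card ≤ F.rank := by
  classical
  have hmem : ∀ i : Fin q, F i ∈ LinearMap.range F.transpose.mulVecLin := by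
    intro i
    refine ⟨Pi.single i 1, ?_⟩
    ext j
    simp [Matrix.mulVecLin_apply, Matrix.mulVec_single, Matrix.transpose_apply]
  have hspan : Submodule.span ℝ (Set.range fun i : S => F i) ≤
      LinearMap.range F.transpose.mulVecLin := by
    rw [Submodule.span_le]
    rintro v ⟨i, rfl⟩
    exact hmem i
  have hcard : (Fintype.card S : ℕ) =
      Module.finrank ℝ (Submodule.span ℝ (Set.range fun i : S => F i)) :=
    (finrank_span_eq_card h).symm
  have hmono := Submodule.finrank_mono hspan
  have : S.card = Fintype.card S := (Fintype.card_coe S).symm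
  rw [this, hcard]
  calc Module.finrank ℝ (Submodule.span ℝ (Set.range fun i : S => F i))
      ≤ Module.finrank ℝ (LinearMap.range F.transpose.mulVecLin) := hmono
    _ = F.transpose.rank := rfl
    _ = F.rank := Matrix.rank_transpose F

/-- If a subset of rows is too large, there is a nontrivial linear dependence among the rows,
with coefficients summing to zero (using that rows are stochastic). -/
lemma exists_dep {q k : ℕ} (F : Matrix (Fin q) (Fin k) ℝ)
    (hF1 : ∀ i, ∑ j, F i j = 1)
    (S : Finset (Fin q)) (hS : F.rank < S.card) :
    ∃ c : Fin q → ℝ, (∀ i ∉ S, c i = 0) ∧ (∃ i ∈ S, 0 < c i) ∧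
      (∀ j, ∑ i, c i * F i j = 0) ∧ (∑ i, c i = 0) := by
  classical
  have hnl : ¬ LinearIndependent ℝ (fun i : S => F i) := by
    intro h
    exact absurd (rows_card_le_rank F S h) (not_le.2 hS)
  rw [Fintype.not_linearIndependent_iff] at hnl
  obtain ⟨g, hg0, ⟨i₀, hi₀⟩⟩ := hnl
  set c : Fin q → ℝ := fun i => if h : i ∈ S then g ⟨i, h⟩ else 0 with hc
  have hout : ∀ i ∉ S, c i = 0 := fun i hi => dif_neg hi
  have hcS : ∀ i : S, c ↑i = g i := fun i => by
    simp only [hc, dif_pos i.2]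
  have hrel : ∀ j, ∑ i, c i * F i j = 0 := by
    intro j
    have h1 : ∑ i, c i * F i j = ∑ i ∈ S, c i * F i j := by
      refine (Finset.sum_subset (Finset.subset_univ S) ?_).symm
      intro i _ hi
      rw [hout i hi, zero_mul]
    have h2 : ∑ i ∈ S, c i * F i j = ∑ i : S, g i * F ↑i j := by
      rw [← Finset.sum_attach S (fun i => c i * F i j)]
      exact Finset.sum_congr rfl fun i _ => by rw [hcS i]
    have h3 : ∑ i : S, g i * F ↑i j = 0 := by
      have := congrFun hg0 j
      simpa [Finset.sum_apply] using this
    rw [h1, h2, h3]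
  have hsum0 : ∑ i, c i = 0 := by
    have : ∑ i, c i = ∑ i, c i * (∑ j, F i j) := by
      refine Finset.sum_congr rfl fun i _ => by rw [hF1 i, mul_one]
    rw [this]
    have : ∑ i, c i * (∑ j, F i j) = ∑ j, ∑ i, c i * F i j := by
      rw [Finset.sum_comm]
      exact Finset.sum_congr rfl fun i _ => by rw [Finset.mul_sum]
    rw [this]
    exact Finset.sum_eq_zero fun j _ => hrel j
  -- now find a positive coefficient, negating c if necessary
  by_cases hpos : ∃ i ∈ S, 0 < c i
  · exact ⟨c, hout, hpos, hrel, hsum0⟩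
  · exfalso
    push_neg at hpos
    have hcnp : ∀ i ∈ Finset.univ, c i ≤ 0 := by
      intro i _
      by_cases hiS : i ∈ S
      · exact hpos i hiS
      · rw [hout i hiS]
    have hall := (Finset.sum_eq_zero_iff_of_nonpos hcnp).1 hsum0
    exact hi₀ (by rw [← hcS i₀]; exact hall ↑i₀ (Finset.mem_univ _))

/-- Carathéodory-type lemma: any stochastic combination of the rows of `F` can be realized
with a weight vector supported on at most `F.rank` indices. -/
lemma carath {q k : ℕ} (F : Matrix (Fin q) (Fin k) ℝ)
    (hF1 : ∀ i, ∑ j, F i j = 1) :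
    ∀ n (S : Finset (Fin q)), S.card ≤ n → ∀ p : Fin q → ℝ, (∀ i, 0 ≤ p i) →
      (∀ i ∉ S, p i = 0) → (∑ i, p i = 1) →
      ∃ T : Finset (Fin q), T.card ≤ F.rank ∧ ∃ p' : Fin q → ℝ, (∀ i, 0 ≤ p' i) ∧
        (∀ i ∉ T, p' i = 0) ∧ (∑ i, p' i = 1) ∧
        ∀ j, ∑ i, p' i * F i j = ∑ i, p i * F i j := by
  classical
  intro n
  induction n with
  | zero =>
    intro S hS p hp0 hsup hp1
    refine ⟨S, ?_, p, hp0, hsup, hp1, fun j => rfl⟩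
    omega
  | succ n ih =>
    intro S hS p hp0 hsup hp1
    by_cases hc : S.card ≤ F.rank
    · exact ⟨S, hc, p, hp0, hsup, hp1, fun j => rfl⟩
    · push_neg at hc
      obtain ⟨c, hcout, ⟨iex, hiexS, hiexpos⟩, hrel, hcsum⟩ := exists_dep F hF1 S hc
      set T₀ := S.filter fun i => 0 < c i with hT₀
      have hT₀ne : T₀.Nonempty := ⟨iex, mem_filter.2 ⟨hiexS, hiexpos⟩⟩
      obtain ⟨i₀, hi₀T, hi₀min⟩ :=
        Finset.exists_min_image T₀ (fun i => p i / c i) hT₀ne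
      have hi₀S : i₀ ∈ S := (mem_filter.1 hi₀T).1
      have hci₀ : 0 < c i₀ := (mem_filter.1 hi₀T).2
      set t := p i₀ / c i₀ with htdef
      have ht0 : 0 ≤ t := div_nonneg (hp0 i₀) (le_of_lt hci₀)
      set p'' : Fin q → ℝ := fun i => p i - t * c i with hp''
      have hp''0 : ∀ i, 0 ≤ p'' i := by
        intro i
        by_cases hiS : i ∈ S
        · by_cases hcip : 0 < c i
          · have hiT : i ∈ T₀ := mem_filter.2 ⟨hiS, hcip⟩
            have := hi₀min i hiT
            have : t * c i ≤ p i := by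
              rw [htdef]
              calc p i₀ / c i₀ * c i ≤ p i / c i * c i :=
                mul_le_mul_of_nonneg_right (hi₀min i hiT) (le_of_lt hcip)
              _ = p i := div_mul_cancel₀ _ (ne_of_gt hcip)
            simp only [hp'']
            linarith
          · push_neg at hcip
            have : t * c i ≤ 0 := mul_nonpos_of_nonneg_of_nonpos ht0 hcip
            simp only [hp'']
            linarith [hp0 i]
        · simp only [hp'']
          rw [hsup i hiS, hcout i hiS, mul_zero, sub_zero]
      have hp''i₀ : p'' i₀ = 0 := by
        simp only [hp'', htdef]
        rw [div_mul_cancel₀ _ (ne_of_gt hci₀)]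
        ring
      have hp''sup : ∀ i ∉ S.erase i₀, p'' i = 0 := by
        intro i hi
        by_cases hii : i = i₀
        · rw [hii]; exact hp''i₀
        · have hiS : i ∉ S := fun hiS => hi (Finset.mem_erase.2 ⟨hii, hiS⟩)
          simp only [hp'']
          rw [hsup i hiS, hcout i hiS, mul_zero, sub_zero]
      have hp''sum : ∑ i, p'' i = 1 := by
        simp only [hp'']
        rw [Finset.sum_sub_distrib, ← Finset.mul_sum, hcsum, mul_zero, sub_zero, hp1]
      have hp''comb : ∀ j, ∑ i, p'' i * F i j = ∑ i, p i * F i j := by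
        intro j
        simp only [hp'']
        have : ∀ i, (p i - t * c i) * F i j = p i * F i j - t * (c i * F i j) := by
          intro i; ring
        simp_rw [this]
        rw [Finset.sum_sub_distrib, ← Finset.mul_sum, hrel j, mul_zero, sub_zero]
      have hcard : (S.erase i₀).card ≤ n := by
        have := Finset.card_erase_of_mem hi₀S
        omega
      obtain ⟨T, hT, p', h1, h2, h3, h4⟩ :=
        ih (S.erase i₀) hcard p'' hp''0 hp''sup hp''sum
      exact ⟨T, hT, p', h1, h2, h3, fun j => (h4 j).trans (hp''comb j)⟩

/-- Covering the image B of a simplex under a stochastic matrix F of rank l: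
from any KL-covering of Δ_{l-1} of size M with radius ε one obtains a KL-covering of B
of size at most binomial(q,l)·M with radius ε. Hence M(k, ε, B) ≤ C(q,l)·M(l, ε) with
C(q,l) = binomial(q,l). -/
theorem covering_subspace (q k l : ℕ) (hl : 0 < l)
    (F : Matrix (Fin q) (Fin k) ℝ)
    (hF0 : ∀ i j, 0 ≤ F i j) (hF1 : ∀ i, ∑ j, F i j = 1)
    (hrank : F.rank = l)
    (ε : ℝ) (hε : 0 < ε)
    (C : Finset (Fin l → ℝ))
    (hCdist : ∀ r ∈ C, (∀ i, 0 < r i) ∧ ∑ i, r i = 1)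
    (hCcov : ∀ p : Fin l → ℝ, (∀ i, 0 ≤ p i) → ∑ i, p i = 1 →
      ∃ r ∈ C, ∑ i, p i * Real.log (p i / r i) ≤ ε) :
    ∃ C' : Finset (Fin k → ℝ),
      (C'.card : ℝ) ≤ (q.choose l : ℝ) * C.card ∧
      ∀ b : Fin k → ℝ,
        (∃ p : Fin q → ℝ, (∀ i, 0 ≤ p i) ∧ (∑ i, p i = 1) ∧ ∀ j, b j = ∑ i, p i * F i j) →
        ∃ r' ∈ C', ∑ j, b j * Real.log (b j / r' j) ≤ ε := by
  classical
  have hlq : l ≤ q := by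
    have := F.rank_le_card_height
    rw [hrank, Fintype.card_fin] at this
    exact this
  set Φ : Finset (Fin q) × (Fin l → ℝ) → (Fin k → ℝ) :=
    fun sr => if h : sr.1.card = l then
      (fun j => ∑ a, sr.2 a * F (sr.1.orderEmbOfFin h a) j) else 0 with hΦ
  refine ⟨Finset.image Φ (((Finset.univ : Finset (Fin q)).powersetCard l) ×ˢ C), ?_, ?_⟩
  · have h1 := Finset.card_image_le
      (s := ((Finset.univ : Finset (Fin q)).powersetCard l) ×ˢ C) (f := Φ)
    have h2 : (((Finset.univ : Finset (Fin q)).powersetCard l) ×ˢ C).card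
        = q.choose l * C.card := by
      rw [Finset.card_product, Finset.card_powersetCard, Finset.card_univ, Fintype.card_fin]
    calc ((Finset.image Φ (((Finset.univ : Finset (Fin q)).powersetCard l) ×ˢ C)).card : ℝ)
        ≤ ((((Finset.univ : Finset (Fin q)).powersetCard l) ×ˢ C).card : ℝ) := by
          exact_mod_cast h1
      _ = (q.choose l : ℝ) * C.card := by rw [h2]; push_cast; ring
  · rintro b ⟨p, hp0, hp1, hpb⟩
    obtain ⟨T, hTcard, p', hp'0, hp'sup, hp'1, hp'comb⟩ :=
      carath F hF1 q Finset.univ (by simp) p hp0 (fun i hi => absurd (Finset.mem_univ i) hi) hp1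
    rw [hrank] at hTcard
    obtain ⟨S, hTS, _, hScard⟩ := Finset.exists_subsuperset_card_eq
      (Finset.subset_univ T) hTcard (by rw [Finset.card_univ, Fintype.card_fin]; exact hlq)
    set e := S.orderEmbOfFin hScard with he
    have hinj : Function.Injective e := e.injective
    have himg : Finset.image (fun a => e a) Finset.univ = S := by
      ext i
      simp only [Finset.mem_image, Finset.mem_univ, true_and]
      constructor
      · rintro ⟨a, rfl⟩
        have : e a ∈ Set.range e := Set.mem_range_self a
        rwa [Finset.range_orderEmbOfFin S hScard] at this
      · intro hi
        have : i ∈ Set.range e := by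
          rw [Finset.range_orderEmbOfFin S hScard]; exact hi
        obtain ⟨a, ha⟩ := this
        exact ⟨a, ha⟩
    have hsum_univ_S : ∀ f : Fin q → ℝ, (∀ i ∉ S, f i = 0) →
        ∑ i, f i = ∑ a, f (e a) := by
      intro f hf
      rw [← Finset.sum_subset (Finset.subset_univ S) (fun i _ hi => hf i hi)]
      rw [← himg, Finset.sum_image (fun a _ b _ hab => hinj hab)]
    have hp'S : ∀ i ∉ S, p' i = 0 := fun i hi => hp'sup i (fun hT => hi (hTS hT))
    set pl : Fin l → ℝ := fun a => p' (e a) with hpl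
    have hpl0 : ∀ a, 0 ≤ pl a := fun a => hp'0 (e a)
    have hpl1 : ∑ a, pl a = 1 := by
      rw [hpl, ← hsum_univ_S p' hp'S, hp'1]
    obtain ⟨r, hrC, hrKL⟩ := hCcov pl hpl0 hpl1
    have hrpos : ∀ a, 0 < r a := (hCdist r hrC).1
    set r' : Fin k → ℝ := fun j => ∑ a, r a * F (e a) j with hr'
    have hr'mem : r' ∈ Finset.image Φ
        (((Finset.univ : Finset (Fin q)).powersetCard l) ×ˢ C) := by
      refine Finset.mem_image.2 ⟨(S, r), ?_, ?_⟩
      · exact Finset.mem_product.2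
          ⟨Finset.mem_powersetCard.2 ⟨Finset.subset_univ S, hScard⟩, hrC⟩
      · simp only [hΦ]
        rw [dif_pos hScard]
    refine ⟨r', hr'mem, ?_⟩
    have hb : ∀ j, b j = ∑ a, pl a * F (e a) j := by
      intro j
      rw [hpb j, ← hp'comb j]
      exact hsum_univ_S (fun i => p' i * F i j)
        (fun i hi => by show p' i * F i j = 0; rw [hp'S i hi, zero_mul]) 
    have hkey := kl_push_aux (fun a => F (e a)) (fun a j => hF0 (e a) j) pl r hpl0 hrpos
    have hkey2 : ∑ a, (∑ j, F (e a) j) * (pl a * Real.log (pl a / r a))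
        = ∑ a, pl a * Real.log (pl a / r a) := by
      refine Finset.sum_congr rfl fun a _ => by rw [hF1 (e a), one_mul]
    rw [hkey2] at hkey
    calc ∑ j, b j * Real.log (b j / r' j)
        = ∑ j, (∑ a, pl a * F (e a) j) *
            Real.log ((∑ a, pl a * F (e a) j) / (∑ a, r a * F (e a) j)) := by
          refine Finset.sum_congr rfl fun j _ => by rw [hb j, hr']
      _ ≤ ∑ a, pl a * Real.log (pl a / r a) := hkey
      _ ≤ ε := hrKL
end

section
/- For any random variable π with finite range, any channel producing Y^n, and any finite collection N of distributions {Q^n_μ : μ ∈ N} on the output space, I(π; Y^n) ≤ log|N| + max_π min_{μ ∈ N} D(P_{Y^n|π} ‖ Q^n_μ). -/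
open Finset

/-- Mutual information is bounded by log of the size of any finite collection N of reference
distributions plus the worst-case best divergence to the collection:
I(π; Y) ≤ log|N| + max_π min_{Q ∈ N} D(P_{Y|π} ‖ Q). -/
theorem mutualInfo_le_log_cover (M d : ℕ) (hM : 0 < M) (hd : 0 < d)
    (w : Fin M → ℝ) (hw0 : ∀ i, 0 ≤ w i) (hw1 : ∑ i, w i = 1)
    (K : Fin M → Fin d → ℝ) (hK0 : ∀ i y, 0 ≤ K i y) (hK1 : ∀ i, ∑ y, K i y = 1)
    (N : Finset (Fin d → ℝ)) (hNne : N.Nonempty)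
    (hNdist : ∀ Q ∈ N, (∀ y, 0 < Q y) ∧ ∑ y, Q y = 1)
    (B : ℝ) (hB : ∀ i, ∃ Q ∈ N, ∑ y, K i y * Real.log (K i y / Q y) ≤ B) :
    ∑ i, w i * ∑ y, K i y * Real.log (K i y / ∑ i', w i' * K i' y)
      ≤ Real.log N.card + B := by
  set n : ℝ := (N.card : ℝ) with hn
  have hn0 : 0 < n := by
    simp only [hn]
    exact_mod_cast Finset.card_pos.mpr hNne
  set P : Fin d → ℝ := fun y => ∑ i', w i' * K i' y with hP
  set Qt : Fin d → ℝ := fun y => (∑ Q ∈ N, Q y) / n with hQt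
  have hP0 : ∀ y, 0 ≤ P y := fun y =>
    Finset.sum_nonneg fun i _ => mul_nonneg (hw0 i) (hK0 i y)
  have hQt0 : ∀ y, 0 < Qt y := by
    intro y
    apply div_pos _ hn0
    obtain ⟨Q0, hQ0⟩ := hNne
    exact Finset.sum_pos' (fun Q hQ => ((hNdist Q hQ).1 y).le) ⟨Q0, hQ0, (hNdist Q0 hQ0).1 y⟩
  have hQtsum : ∑ y, Qt y = 1 := by
    simp only [hQt, ← Finset.sum_div]
    rw [Finset.sum_comm]
    have : ∑ Q ∈ N, ∑ y, Q y = n := by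
      rw [Finset.sum_congr rfl fun Q hQ => (hNdist Q hQ).2]
      simp [hn, mul_comm]
    rw [this, div_self hn0.ne']
  have hPsum : ∑ y, P y = 1 := by
    simp only [hP]
    rw [Finset.sum_comm]
    simp_rw [← Finset.mul_sum, hK1]
    simpa using hw1
  -- Step 1: replace mixture P by reference Qt
  have step1 : ∑ i, w i * ∑ y, K i y * Real.log (K i y / P y)
      ≤ ∑ i, w i * ∑ y, K i y * Real.log (K i y / Qt y) := by
    rw [← sub_nonneg]
    have key : ∑ i, w i * ∑ y, K i y * Real.log (K i y / Qt y)
        - ∑ i, w i * ∑ y, K i y * Real.log (K i y / P y)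
        = ∑ y, P y * Real.log (P y / Qt y) := by
      rw [← Finset.sum_sub_distrib]
      simp_rw [← mul_sub, ← Finset.sum_sub_distrib, ← mul_sub, Finset.mul_sum]
      rw [Finset.sum_comm]
      refine Finset.sum_congr rfl fun y _ => ?_
      rw [hP]
      rw [Finset.sum_mul]
      refine Finset.sum_congr rfl fun i _ => ?_
      rcases eq_or_lt_of_le (hK0 i y) with hK | hK
      · simp [← hK]
      rcases eq_or_lt_of_le (hw0 i) with hwi | hwi
      · simp [← hwi]
      have hPy : 0 < P y := by
        refine lt_of_lt_of_le (mul_pos hwi hK) ?_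
        exact Finset.single_le_sum (fun j _ => mul_nonneg (hw0 j) (hK0 j y)) (Finset.mem_univ i)
      rw [Real.log_div hK.ne' (hQt0 y).ne', Real.log_div hK.ne' hPy.ne',
        Real.log_div hPy.ne' (hQt0 y).ne']
      ring
    rw [key]
    have hge : ∀ y, P y - Qt y ≤ P y * Real.log (P y / Qt y) := by
      intro y
      rcases eq_or_lt_of_le (hP0 y) with hPy | hPy
      · simp [← hPy]
        exact (hQt0 y).le
      · have h1 : Real.log (Qt y / P y) ≤ Qt y / P y - 1 :=
          Real.log_le_sub_one_of_pos (div_pos (hQt0 y) hPy)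
        have h2 : Real.log (Qt y / P y) = - Real.log (P y / Qt y) := by
          rw [← Real.log_inv, inv_div]
        rw [h2] at h1
        have h3 : 1 - Qt y / P y ≤ Real.log (P y / Qt y) := by linarith
        have := mul_le_mul_of_nonneg_left h3 hPy.le
        rw [mul_sub, mul_one, mul_div_cancel₀ _ hPy.ne'] at this
        linarith
    calc (0:ℝ) = ∑ y, (P y - Qt y) := by rw [Finset.sum_sub_distrib, hPsum, hQtsum]; ring
      _ ≤ _ := Finset.sum_le_sum fun y _ => hge y
  -- Step 2: bound each divergence to Qt by log n + B
  have step2 : ∀ i, ∑ y, K i y * Real.log (K i y / Qt y) ≤ Real.log n + B := by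
    intro i
    obtain ⟨Q, hQN, hQB⟩ := hB i
    have hQpos := (hNdist Q hQN).1
    have point : ∀ y, K i y * Real.log (K i y / Qt y)
        ≤ K i y * Real.log n + K i y * Real.log (K i y / Q y) := by
      intro y
      rcases eq_or_lt_of_le (hK0 i y) with hK | hK
      · simp [← hK]
      have hQle : Q y ≤ n * Qt y := by
        rw [hQt, mul_div_cancel₀ _ hn0.ne']
        exact Finset.single_le_sum (fun R hR => ((hNdist R hR).1 y).le) hQN
      have hlog : Real.log (Q y) ≤ Real.log n + Real.log (Qt y) := by
        calc Real.log (Q y) ≤ Real.log (n * Qt y) :=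
              Real.log_le_log (hQpos y) hQle
          _ = Real.log n + Real.log (Qt y) := Real.log_mul hn0.ne' (hQt0 y).ne'
      rw [Real.log_div hK.ne' (hQt0 y).ne', Real.log_div hK.ne' (hQpos y).ne']
      nlinarith [hK.le]
    calc ∑ y, K i y * Real.log (K i y / Qt y)
        ≤ ∑ y, (K i y * Real.log n + K i y * Real.log (K i y / Q y)) :=
          Finset.sum_le_sum fun y _ => point y
      _ = Real.log n + ∑ y, K i y * Real.log (K i y / Q y) := by
          rw [Finset.sum_add_distrib, ← Finset.sum_mul, hK1, one_mul]
      _ ≤ Real.log n + B := by linarith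
  calc ∑ i, w i * ∑ y, K i y * Real.log (K i y / P y)
      ≤ ∑ i, w i * ∑ y, K i y * Real.log (K i y / Qt y) := step1
    _ ≤ ∑ i, w i * (Real.log n + B) :=
        Finset.sum_le_sum fun i _ => mul_le_mul_of_nonneg_left (step2 i) (hw0 i)
    _ = Real.log n + B := by rw [← Finset.sum_mul, hw1, one_mul]
end

section
/- Let Y^n have joint distribution P_{Y^n} and let Q_Y be a fixed distribution, with Q_Y^n the product. If D(P_{Y^n} ‖ Q_Y^n) ≤ n·D(P_Y ‖ Q_Y) + c where P_Y is the common marginal of each coordinate of Y^n, then for every m ≤ n, the marginal P_{Y^m} of the first m coordinates satisfies D(P_{Y^m} ‖ Q_Y^m) ≤ m·D(P_Y ‖ Q_Y) + (m/n)·c. -/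
/-!
Write `D j = D(P_{Y^j} ‖ Q^j) = -H(Y^j) - j · E[log Q(Y₁)]`; exchangeability makes every
coordinate contribute the same cross term. Conditional submodularity of entropy gives
`H(Y^{j+2}) + H(Y^j) ≤ H(Y^j, Y_{j+1}) + H(Y^j, Y_{j+2}) = 2 H(Y^{j+1})`, the last equality
again by exchangeability. So `j ↦ D j` is convex with `D 0 = 0`, hence `D j / j` is
nondecreasing and `D m ≤ (m / n) · D n ≤ m · D(P_Y ‖ Q) + (m / n) · c`.
-/

open Finset Real

lemma mul_log_marginals_le {r sA sB t : ℝ} (hr : 0 ≤ r) (hrA : r ≤ sA) (hrB : r ≤ sB)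
    (hAt : sA ≤ t) :
    r * (log sA + log sB - log t - log r) ≤ sA * sB / t - r := by
  rcases hr.eq_or_lt with rfl | hr
  · have hA : 0 ≤ sA := hrA
    have hB : 0 ≤ sB := hrB
    have ht : 0 ≤ t := hA.trans hAt
    simp only [zero_mul, sub_zero]
    positivity
  · have hA : 0 < sA := hr.trans_le hrA
    have hB : 0 < sB := hr.trans_le hrB
    have ht : 0 < t := hA.trans_le hAt
    have hlog : log sA + log sB - log t - log r = log (sA * sB / t / r) := by
      rw [log_div (by positivity) hr.ne', log_div (by positivity) ht.ne',
        log_mul hA.ne' hB.ne']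
    calc r * (log sA + log sB - log t - log r) ≤ r * (sA * sB / t / r - 1) := by
          rw [hlog]; gcongr; exact log_le_sub_one_of_pos (by positivity)
      _ = sA * sB / t - r := by field_simp

/-- Nonnegativity of mutual information, for unnormalised masses. -/
lemma sum_mul_log_marginals_le {A B : Type*} [Fintype A] [Fintype B] (r : A → B → ℝ)
    (hr : ∀ a b, 0 ≤ r a b) :
    ∑ a, (∑ b, r a b) * log (∑ b, r a b) + ∑ b, (∑ a, r a b) * log (∑ a, r a b)
      ≤ ∑ a, ∑ b, r a b * log (r a b) + (∑ a, ∑ b, r a b) * log (∑ a, ∑ b, r a b) := by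
  set sA : A → ℝ := fun a => ∑ b, r a b
  set sB : B → ℝ := fun b => ∑ a, r a b
  set t : ℝ := ∑ a, ∑ b, r a b
  have hsA : ∑ a, sA a = t := rfl
  have hsB : ∑ b, sB b = t := sum_comm
  have bound : ∀ a b, r a b * (log (sA a) + log (sB b) - log t - log (r a b))
      ≤ sA a * sB b / t - r a b := fun a b =>
    mul_log_marginals_le (hr a b) (single_le_sum (fun b _ => hr a b) (mem_univ b))
      (single_le_sum (fun a _ => hr a b) (mem_univ a))
      (single_le_sum (fun a _ => sum_nonneg fun b _ => hr a b) (mem_univ a))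
  have rhs : ∑ a, ∑ b, (sA a * sB b / t - r a b) = 0 := by
    simp only [sum_sub_distrib]
    rw [show ∑ a, ∑ b, r a b = t from rfl]
    simp only [← mul_sum, ← sum_mul, ← sum_div, hsB, hsA]
    rcases eq_or_ne t 0 with h | h
    · rw [h]; simp
    · field_simp; ring
  have lhs : ∑ a, ∑ b, r a b * (log (sA a) + log (sB b) - log t - log (r a b))
      = ∑ a, sA a * log (sA a) + ∑ b, sB b * log (sB b) - t * log t
        - ∑ a, ∑ b, r a b * log (r a b) := by
    simp only [mul_add, mul_sub, sum_add_distrib, sum_sub_distrib, ← sum_mul]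
    rw [sum_comm (f := fun a b => r a b * log (sB b))]
    simp only [← sum_mul]
    rfl
  have := sum_le_sum fun a (_ : a ∈ univ) => sum_le_sum fun b (_ : b ∈ univ) => bound a b
  linarith

section Pushforward

variable {Z Y : Type*} [Fintype Z] [DecidableEq Y]

def pushforward (f : Z → Y) (p : Z → ℝ) (y : Y) : ℝ :=
  ∑ z ∈ univ.filter (fun z => f z = y), p z

/-- `∑ z, p z * log P(f = f z)`: minus the entropy of `f` when `p` is a probability mass
function. -/
noncomputable def negEntropy (p : Z → ℝ) (f : Z → Y) : ℝ :=
  ∑ z, p z * log (pushforward f p (f z))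

variable {p : Z → ℝ}

lemma pushforward_congr {Y' : Type*} [DecidableEq Y'] {f : Z → Y} {g : Z → Y'} {y : Y}
    {y' : Y'} (h : ∀ z, f z = y ↔ g z = y') : pushforward f p y = pushforward g p y' := by
  unfold pushforward
  rw [filter_congr fun z _ => h z]

lemma pushforward_eq_sum {X : Type*} [Fintype X] [DecidableEq X] (f : Z → Y) (φ : Z → X)
    (y : Y) :
    pushforward f p y = ∑ x, pushforward (fun z => (f z, φ z)) p (y, x) := by
  unfold pushforward
  rw [← sum_fiberwise _ φ]
  refine sum_congr rfl fun x _ => ?_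
  rw [filter_filter]
  simp only [Prod.mk.injEq]

lemma sum_pushforward_mul [Fintype Y] (f : Z → Y) (F : Y → ℝ) :
    ∑ y, pushforward f p y * F y = ∑ z, p z * F (f z) := by
  rw [← sum_fiberwise univ f (fun z => p z * F (f z))]
  refine sum_congr rfl fun y _ => ?_
  rw [pushforward, sum_mul]
  exact sum_congr rfl fun z hz => by rw [(mem_filter.mp hz).2]

lemma negEntropy_eq_sum [Fintype Y] (f : Z → Y) :
    negEntropy p f = ∑ y, pushforward f p y * log (pushforward f p y) :=
  (sum_pushforward_mul f fun y => log (pushforward f p y)).symm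

lemma negEntropy_congr {Y' : Type*} [DecidableEq Y'] {f : Z → Y} {g : Z → Y'}
    (h : ∀ z z', f z' = f z ↔ g z' = g z) : negEntropy p f = negEntropy p g :=
  sum_congr rfl fun z _ => by rw [pushforward_congr (h z)]

lemma negEntropy_const (y : Y) :
    negEntropy p (fun _ => y) = (∑ z, p z) * log (∑ z, p z) := by
  simp [negEntropy, pushforward, sum_mul]

lemma negEntropy_comp_equiv (e : Z ≃ Z) (he : ∀ z, p (e z) = p z) (f : Z → Y) :
    negEntropy p (fun z => f (e z)) = negEntropy p f := by
  have hpush : ∀ z, pushforward (fun z => f (e z)) p (f (e z)) = pushforward f p (f (e z)) :=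
    fun z => sum_equiv e (by simp) fun z' _ => (he z').symm
  unfold negEntropy
  simp only [hpush]
  exact Fintype.sum_equiv e _ _ fun z => by rw [he]

/-- Nonnegativity of the conditional mutual information `I(g; h | f)`. -/
lemma negEntropy_pair_add_le {W A B : Type*} [Fintype W] [Fintype A] [Fintype B]
    [DecidableEq W] [DecidableEq A] [DecidableEq B] (hp : ∀ z, 0 ≤ p z)
    (f : Z → W) (g : Z → A) (h : Z → B) :
    negEntropy p (fun z => (f z, g z)) + negEntropy p (fun z => (f z, h z))
      ≤ negEntropy p (fun z => (f z, g z, h z)) + negEntropy p f := by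
  set r : W → A → B → ℝ := fun w a b => pushforward (fun z => (f z, g z, h z)) p (w, a, b)
  have hfg : ∀ w a, pushforward (fun z => (f z, g z)) p (w, a) = ∑ b, r w a b := fun w a => by
    rw [pushforward_eq_sum _ h]
    exact sum_congr rfl fun b _ =>
      pushforward_congr fun z => by simp only [Prod.mk.injEq, and_assoc]
  have hfh : ∀ w b, pushforward (fun z => (f z, h z)) p (w, b) = ∑ a, r w a b := fun w b => by
    rw [pushforward_eq_sum _ g]
    exact sum_congr rfl fun a _ =>
      pushforward_congr fun z => by simp only [Prod.mk.injEq]; tauto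
  have hf : ∀ w, pushforward f p w = ∑ a, ∑ b, r w a b := fun w => by
    rw [pushforward_eq_sum _ g]
    simp only [hfg]
  simp only [negEntropy_eq_sum, Fintype.sum_prod_type, hfg, hfh, hf, ← sum_add_distrib]
  exact sum_le_sum fun w _ => sum_mul_log_marginals_le (r w) fun a b => sum_nonneg fun z _ => hp z

end Pushforward

section Prefix

variable {n : ℕ} {α : Type*}

/-- The first `j` coordinates, indexed by a subtype so that `j ≤ n` need not be assumed. -/
def prefixOf (j : ℕ) (z : Fin n → α) : {i : Fin n // (i : ℕ) < j} → α := fun i => z i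

lemma prefixOf_eq_iff {j : ℕ} {z z' : Fin n → α} :
    prefixOf j z = prefixOf j z' ↔ ∀ i : Fin n, (i : ℕ) < j → z i = z' i := by
  simp [prefixOf, funext_iff]

lemma prefixOf_succ_eq_iff {j : ℕ} {z z' : Fin n → α} (i₀ : Fin n) (hi₀ : (i₀ : ℕ) = j) :
    prefixOf (j + 1) z = prefixOf (j + 1) z' ↔ prefixOf j z = prefixOf j z' ∧ z i₀ = z' i₀ := by
  simp only [prefixOf_eq_iff]
  constructor
  · intro h
    exact ⟨fun i hi => h i (by omega), h i₀ (by omega)⟩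
  · rintro ⟨h, h₀⟩ i hi
    rcases Nat.lt_succ_iff_lt_or_eq.mp hi with hi | hi
    · exact h i hi
    · rwa [Fin.ext (hi.trans hi₀.symm)]

lemma prefixOf_comp_swap {j : ℕ} (z : Fin n → α) (a b : Fin n) (ha : j ≤ (a : ℕ))
    (hb : j ≤ (b : ℕ)) :
    prefixOf j (fun i => z (Equiv.swap a b i)) = prefixOf j z := by
  funext ⟨i, hi⟩
  have hne : ∀ c : Fin n, j ≤ (c : ℕ) → i ≠ c := fun c hc => Fin.ne_of_val_ne (by omega)
  exact congrArg z (Equiv.swap_apply_of_ne_of_ne (hne a ha) (hne b hb))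

lemma negEntropy_prefixOf_zero [Fintype α] [DecidableEq α] (p : (Fin n → α) → ℝ) :
    negEntropy p (prefixOf 0) = (∑ z, p z) * log (∑ z, p z) := by
  rw [negEntropy_congr (g := fun _ => ()) fun z z' => by simp [prefixOf_eq_iff], negEntropy_const]

end Prefix

lemma sum_mul_apply_eq_of_exchangeable {ι α : Type*} [Fintype ι] [DecidableEq ι] [Fintype α]
    {p : (ι → α) → ℝ} (hexch : ∀ (σ : Equiv.Perm ι) z, p (z ∘ σ) = p z)
    (i i' : ι) (F : α → ℝ) : ∑ z, p z * F (z i) = ∑ z, p z * F (z i') :=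
  Fintype.sum_equiv (Equiv.arrowCongr (Equiv.swap i i').symm (Equiv.refl α)) _ _ fun z => by
    change _ = p (z ∘ Equiv.swap i i') * F (z (Equiv.swap i i' i'))
    rw [hexch, Equiv.swap_apply_right]

theorem two_mul_negEntropy_prefixOf_le {n : ℕ} {α : Type*} [Fintype α] [DecidableEq α]
    {p : (Fin n → α) → ℝ} (hp : ∀ z, 0 ≤ p z)
    (hexch : ∀ (σ : Equiv.Perm (Fin n)) z, p (z ∘ σ) = p z) {j : ℕ} (hj : j + 2 ≤ n) :
    2 * negEntropy p (prefixOf (j + 1))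
      ≤ negEntropy p (prefixOf j) + negEntropy p (prefixOf (j + 2)) := by
  set a : Fin n := ⟨j, by omega⟩
  set b : Fin n := ⟨j + 1, by omega⟩
  have h_succ : negEntropy p (prefixOf (j + 1)) = negEntropy p (fun z => (prefixOf j z, z a)) :=
    negEntropy_congr fun _ _ => by rw [Prod.mk.injEq]; exact prefixOf_succ_eq_iff a rfl
  have h_swap :
      negEntropy p (prefixOf (j + 1)) = negEntropy p (fun z => (prefixOf j z, z b)) := by
    rw [h_succ, ← negEntropy_comp_equiv (Equiv.arrowCongr (Equiv.swap a b).symm (Equiv.refl α))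
      (hexch _)]
    congr 1
    funext z
    change (prefixOf j (fun i => z (Equiv.swap a b i)), z (Equiv.swap a b a)) = _
    rw [prefixOf_comp_swap z a b le_rfl (Nat.le_succ j), Equiv.swap_apply_left]
  have h_succ_succ : negEntropy p (prefixOf (j + 2))
      = negEntropy p (fun z => (prefixOf j z, z a, z b)) :=
    negEntropy_congr fun _ _ => by
      rw [prefixOf_succ_eq_iff b rfl, prefixOf_succ_eq_iff a rfl, Prod.mk.injEq, Prod.mk.injEq,
        and_assoc]
  have := negEntropy_pair_add_le hp (prefixOf j) (fun z => z a) (fun z => z b)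
  linarith

lemma sum_mul_log_div {Y : Type*} [Fintype Y] (q w : Y → ℝ) (hw : ∀ y, w y ≠ 0) :
    ∑ y, q y * log (q y / w y) = ∑ y, q y * log (q y) - ∑ y, q y * log (w y) := by
  rw [← sum_sub_distrib]
  refine sum_congr rfl fun y _ => ?_
  rcases eq_or_ne (q y) 0 with h | h
  · simp [h]
  · rw [log_div h (hw y), mul_sub]

theorem sum_mul_log_div_prod_eq {n j : ℕ} {α : Type*} [Fintype α] [DecidableEq α]
    {p : (Fin n → α) → ℝ} (hexch : ∀ (σ : Equiv.Perm (Fin n)) z, p (z ∘ σ) = p z)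
    {Q : α → ℝ} (hQ : ∀ a, Q a ≠ 0) (i₀ : Fin n) (hj : j ≤ n) (Pj : (Fin j → α) → ℝ)
    (hPj : ∀ y, Pj y = ∑ z ∈ univ.filter
        (fun z : Fin n → α => ∀ i : Fin j, z (Fin.castLE hj i) = y i), p z) :
    ∑ y, Pj y * log (Pj y / ∏ t, Q (y t))
      = negEntropy p (prefixOf j) - j * ∑ z, p z * log (Q (z i₀)) := by
  set f : (Fin n → α) → (Fin j → α) := fun z i => z (Fin.castLE hj i)
  obtain rfl : Pj = pushforward f p := funext fun y => by
    simp only [hPj, pushforward, f, funext_iff]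
  rw [sum_mul_log_div _ _ fun y => prod_ne_zero_iff.mpr fun t _ => hQ (y t), ← negEntropy_eq_sum]
  congr 1
  · refine negEntropy_congr fun z z' => ?_
    rw [prefixOf_eq_iff, funext_iff]
    exact ⟨fun h i hi => h ⟨i, hi⟩, fun h i => h _ i.isLt⟩
  · calc ∑ y, pushforward f p y * log (∏ t, Q (y t))
        = ∑ t : Fin j, ∑ z, p z * log (Q (z (Fin.castLE hj t))) := by
          rw [sum_pushforward_mul, sum_comm]
          simp only [f, log_prod fun t _ => hQ _, mul_sum]
      _ = j * ∑ z, p z * log (Q (z i₀)) := by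
          simp only [sum_mul_apply_eq_of_exchangeable hexch _ i₀ (fun a => log (Q a)), sum_const,
            card_univ, Fintype.card_fin, nsmul_eq_mul]

lemma succ_mul_le_mul_succ_of_convex {D : ℕ → ℝ} {N : ℕ} (hD0 : D 0 = 0)
    (hconv : ∀ j, j + 2 ≤ N → 2 * D (j + 1) ≤ D j + D (j + 2)) :
    ∀ j, j + 1 ≤ N → (j + 1 : ℝ) * D j ≤ j * D (j + 1)
  | 0, _ => by simp [hD0]
  | j + 1, hj => by
    have ih := succ_mul_le_mul_succ_of_convex hD0 hconv j (by omega)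
    have := mul_le_mul_of_nonneg_left (hconv j hj) (by positivity : (0 : ℝ) ≤ j + 1)
    push_cast
    linarith

lemma mul_le_mul_of_convex {D : ℕ → ℝ} {N : ℕ} (hD0 : D 0 = 0)
    (hconv : ∀ j, j + 2 ≤ N → 2 * D (j + 1) ≤ D j + D (j + 2)) {m n : ℕ} (hmn : m ≤ n)
    (hnN : n ≤ N) : (n : ℝ) * D m ≤ m * D n := by
  induction n, hmn using Nat.le_induction with
  | base => exact le_rfl
  | succ n hmn ih =>
    have ih := ih (by omega)
    have step := succ_mul_le_mul_succ_of_convex hD0 hconv n hnN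
    rcases Nat.eq_zero_or_pos n with rfl | hn
    · obtain rfl : m = 0 := by omega
      simp [hD0]
    · have hn : (0 : ℝ) < n := by exact_mod_cast hn
      have hm : (0 : ℝ) ≤ m := by positivity
      refine le_of_mul_le_mul_left ?_ hn
      push_cast
      linarith [mul_le_mul_of_nonneg_left ih (by positivity : (0 : ℝ) ≤ n + 1),
        mul_le_mul_of_nonneg_left step hm]

/-- Han's-inequality consequence: if the exchangeable law of Y^n satisfies
D(P_{Y^n} ‖ Q^n) ≤ n·D(P_Y‖Q) + c, then for every m ≤ n the marginal of the first m
coordinates satisfies D(P_{Y^m} ‖ Q^m) ≤ m·D(P_Y‖Q) + (m/n)·c. -/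
theorem han_marginal_bound (n m k : ℕ) (hm : 0 < m) (hmn : m ≤ n)
    (p : (Fin n → Fin k) → ℝ) (hp0 : ∀ z, 0 ≤ p z) (hp1 : ∑ z, p z = 1)
    (hexch : ∀ (σ : Equiv.Perm (Fin n)) (z : Fin n → Fin k), p (z ∘ σ) = p z)
    (Q : Fin k → ℝ) (hQ0 : ∀ a, 0 < Q a)
    (c : ℝ)
    (PY : Fin k → ℝ)
    (hyp : ∑ z : Fin n → Fin k, p z * Real.log (p z / ∏ t, Q (z t))
        ≤ n * (∑ a, PY a * Real.log (PY a / Q a)) + c)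
    (Pm : (Fin m → Fin k) → ℝ)
    (hPm : ∀ y, Pm y = ∑ z ∈ Finset.univ.filter
        (fun z : Fin n → Fin k => ∀ i : Fin m, z (Fin.castLE hmn i) = y i), p z) :
    ∑ y : Fin m → Fin k, Pm y * Real.log (Pm y / ∏ t, Q (y t))
      ≤ m * (∑ a, PY a * Real.log (PY a / Q a)) + ((m : ℝ) / n) * c := by
  have hn : 0 < n := hm.trans_le hmn
  have hQ : ∀ a, Q a ≠ 0 := fun a => (hQ0 a).ne'
  set L := ∑ z, p z * log (Q (z ⟨0, hn⟩))
  set D : ℕ → ℝ := fun j => negEntropy p (prefixOf j) - j * L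
  have hDm : ∑ y, Pm y * log (Pm y / ∏ t, Q (y t)) = D m :=
    sum_mul_log_div_prod_eq hexch hQ _ hmn Pm hPm
  have hDn : ∑ z, p z * log (p z / ∏ t, Q (z t)) = D n :=
    sum_mul_log_div_prod_eq hexch hQ _ le_rfl p fun y => by simp [← funext_iff, filter_eq']
  have hD0 : D 0 = 0 := by simp [D, negEntropy_prefixOf_zero, hp1]
  have hconv : ∀ j, j + 2 ≤ n → 2 * D (j + 1) ≤ D j + D (j + 2) := fun j hj => by
    have := two_mul_negEntropy_prefixOf_le hp0 hexch hj
    simp only [D]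
    push_cast
    linarith
  have hDmn := mul_le_mul_of_convex hD0 hconv hmn le_rfl
  rw [hDm]
  rw [hDn] at hyp
  calc D m ≤ m / n * D n := by
        rw [div_mul_eq_mul_div, le_div_iff₀ (by positivity)]
        linarith
    _ ≤ m / n * (n * ∑ a, PY a * log (PY a / Q a) + c) := by gcongr
    _ = _ := by field_simp
end
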